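/- arXiv:1606.06102 — 5 statements merged into one kernel-verified Lean document; each statement's English description precedes it below -/
import Mathlib

section
/- For every compact metric space Y, the family Apo(Y) of all nondegenerate aposyndetic subcontinua of Y and the family Col(Y) of all nondegenerate colocally connected subcontinua of Y are F_{σδ}-subsets of the hyperspace C(Y). -/
open Topology TopologicalSpace Metric Set Filter

/-- The Hilbert cube `[0,1]^ℕ` (with the product topology). -/
abbrev HCube : Type := ℕ → unitInterval

/-- The hyperspace `2^X` of nonempty compact subsets of `X`, with the Hausdorff metric. -/
abbrev Hyper (X : Type) [MetricSpace X] : Type := TopologicalSpace.NonemptyCompacts X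

/-- The hyperspace `C(X)` of subcontinua (nonempty compact connected subsets) of `X`. -/
abbrev Subcontinua (X : Type) [MetricSpace X] : Type :=
  {K : TopologicalSpace.NonemptyCompacts X // IsConnected (K : Set X)}

/-- A set is `F_σ` if it is a countable union of closed sets. -/
def IsFsigma {Z : Type} [TopologicalSpace Z] (A : Set Z) : Prop :=
  ∃ F : ℕ → Set Z, (∀ n, IsClosed (F n)) ∧ A = ⋃ n, F n

/-- A set is `F_{σδ}` if it is a countable intersection of `F_σ` sets. -/
def IsFsigmaDelta {Z : Type} [TopologicalSpace Z] (A : Set Z) : Prop :=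
  ∃ F : ℕ → Set Z, (∀ n, IsFsigma (F n)) ∧ A = ⋂ n, F n

/-- A set is in the class `D_2(F_σ)` if it is a difference of two `F_σ` sets. -/
def IsD2Fsigma {Z : Type} [TopologicalSpace Z] (A : Set Z) : Prop :=
  ∃ F G : Set Z, IsFsigma F ∧ IsFsigma G ∧ A = F \ G

/-- A set is coanalytic (`Π^1_1`) if its complement is analytic. -/
def IsCoanalytic {Z : Type} [TopologicalSpace Z] (A : Set Z) : Prop :=
  MeasureTheory.AnalyticSet Aᶜ

/-- A subset `S` of a space has finitely many connected components (as a subspace). -/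
def FinitelyManyComponents {Z : Type} [TopologicalSpace Z] (S : Set Z) : Prop :=
  {C : Set Z | ∃ x ∈ S, C = connectedComponentIn S x}.Finite

/-- A metric continuum is aposyndetic (equivalently, semi-locally connected) iff for every
`ε > 0` every point has an open neighborhood `U` of diameter `< ε` whose complement has
finitely many connected components. -/
def Aposyndetic (Z : Type) [MetricSpace Z] : Prop :=
  ∀ ε : ℝ, 0 < ε → ∀ z : Z, ∃ U : Set Z, IsOpen U ∧ z ∈ U ∧ Metric.diam U < ε ∧
    FinitelyManyComponents Uᶜ

/-- A metric continuum is colocally connected iff every point has arbitrarily small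
open neighborhoods with connected complement. -/
def ColocallyConnected (Z : Type) [MetricSpace Z] : Prop :=
  ∀ ε : ℝ, 0 < ε → ∀ z : Z, ∃ U : Set Z, IsOpen U ∧ z ∈ U ∧ Metric.diam U < ε ∧
    IsPreconnected (Uᶜ : Set Z)

/-- The family `Apo(Y)` of nondegenerate aposyndetic subcontinua of `Y`, in `C(Y)`. -/
def Apo (Y : Type) [MetricSpace Y] : Set (Subcontinua Y) :=
  {K | (K.1 : Set Y).Nontrivial ∧ Aposyndetic (K.1 : Set Y)}

/-- The family `Col(Y)` of nondegenerate colocally connected subcontinua of `Y`, in `C(Y)`. -/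
def Col (Y : Type) [MetricSpace Y] : Set (Subcontinua Y) :=
  {K | (K.1 : Set Y).Nontrivial ∧ ColocallyConnected (K.1 : Set Y)}

/-- A metric continuum `Z` is a Kelley continuum. -/
def KelleyContinuum (Z : Type) [MetricSpace Z] : Prop :=
  ∀ (z : Z) (zs : ℕ → Z), Tendsto zs atTop (nhds z) →
    ∀ W : Set Z, IsCompact W → IsConnected W → z ∈ W →
      ∃ Ws : ℕ → Set Z, (∀ n, IsCompact (Ws n) ∧ IsConnected (Ws n) ∧ zs n ∈ Ws n) ∧
        Tendsto (fun n => Metric.hausdorffDist (Ws n) W) atTop (nhds 0)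

/-- The family `K(X)` of Kelley subcontinua of `X`, in `C(X)`. -/
def KelleyFam (X : Type) [MetricSpace X] : Set (Subcontinua X) :=
  {K | KelleyContinuum (K.1 : Set X)}

/-- The family `LC(X)` of locally connected subcontinua of `X`, in `C(X)`. -/
def LCFam (X : Type) [MetricSpace X] : Set (Subcontinua X) :=
  {K | LocallyConnectedSpace (K.1 : Set X)}

/-- A subset `K` of `X` is a decomposable continuum if it is a union of two proper
subcontinua. -/
def DecomposableSet {X : Type} [TopologicalSpace X] (K : Set X) : Prop :=
  ∃ A B : Set X, IsCompact A ∧ IsConnected A ∧ IsCompact B ∧ IsConnected B ∧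
    A ∪ B = K ∧ A ≠ K ∧ B ≠ K

/-- The family `D(X)` of decomposable subcontinua of `X`, in `C(X)`. -/
def DecompFam (X : Type) [MetricSpace X] : Set (Subcontinua X) :=
  {K | DecomposableSet (K.1 : Set X)}

/-- Covering dimension at most `n`: every finite open cover has a finite open refinement
which still covers and in which every point belongs to at most `n + 1` members. -/
def CovDimLE (Z : Type) [TopologicalSpace Z] (n : ℕ) : Prop :=
  ∀ 𝒰 : Finset (Set Z), (∀ U ∈ 𝒰, IsOpen U) → ⋃₀ (𝒰 : Set (Set Z)) = Set.univ →
    ∃ 𝒱 : Finset (Set Z), (∀ V ∈ 𝒱, IsOpen V) ∧ ⋃₀ (𝒱 : Set (Set Z)) = Set.univ ∧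
      (∀ V ∈ 𝒱, ∃ U ∈ 𝒰, V ⊆ U) ∧
      ∀ z : Z, {V ∈ (𝒱 : Set (Set Z)) | z ∈ V}.ncard ≤ n + 1

/-- Covering dimension at least `n`. -/
def CovDimGE (Z : Type) [TopologicalSpace Z] (n : ℕ) : Prop :=
  ∀ m : ℕ, m + 1 ≤ n → ¬ CovDimLE Z m

/-- The family `D_n(X) ∩ C(X)` of subcontinua of covering dimension `≥ n`. -/
def DimGEFam (X : Type) [MetricSpace X] (n : ℕ) : Set (Subcontinua X) :=
  {K | CovDimGE (K.1 : Set X) n}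

/-- A closed subset `C` of a space `X` is a closed separator of `X`:
`X \ C` is a union of two disjoint nonempty open subsets of `X`. -/
def IsClosedSeparator {X : Type} [TopologicalSpace X] (C : Set X) : Prop :=
  IsClosed C ∧ ∃ U V : Set X, IsOpen U ∧ IsOpen V ∧ U.Nonempty ∧ V.Nonempty ∧
    Disjoint U V ∧ Cᶜ = U ∪ V

/-- The family `S(X)` of closed separators of `X`, viewed in the hyperspace `2^X`. -/
def SepFam (X : Type) [MetricSpace X] : Set (Hyper X) :=
  {K | IsClosedSeparator (K : Set X)}

/-- The family `S(X) ∩ C(X)` of subcontinua of `X` separating `X`, in `C(X)`. -/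
def SepSubcontFam (X : Type) [MetricSpace X] : Set (Subcontinua X) :=
  {K | IsClosedSeparator (K.1 : Set X)}

/-- The family `N(X)` of (nonempty compact) nowhere dense subsets of `X`, in `2^X`. -/
def NwdFam (X : Type) [MetricSpace X] : Set (Hyper X) :=
  {K | IsNowhereDense (K : Set X)}

/-- The family of nowhere dense subcontinua of `X`, in `C(X)`. -/
def NwdSubcontFam (X : Type) [MetricSpace X] : Set (Subcontinua X) :=
  {K | IsNowhereDense (K.1 : Set X)}

/-- A closed set `B` in a metric space `Q` (thought of as a Hilbert cube) is a `Z`-set: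
the identity can be approximated arbitrarily closely by maps missing `B`. -/
def IsZSet {Q : Type} [MetricSpace Q] (B : Set Q) : Prop :=
  IsClosed B ∧ ∀ ε : ℝ, 0 < ε → ∃ f : Q → Q, Continuous f ∧
    (∀ x : Q, f x ∉ B) ∧ ∀ x : Q, dist (f x) x < ε

/-- A `σZ`-set is a countable union of `Z`-sets. -/
def IsSigmaZSet {Q : Type} [MetricSpace Q] (B : Set Q) : Prop :=
  ∃ F : ℕ → Set Q, (∀ n, IsZSet (F n)) ∧ B = ⋃ n, F n

/-- `A ⊆ Q` is `M`-universal for the class `Cl` of subsets of the Hilbert cube: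
every `M₀ ⊆ [0,1]^ℕ` in the class is reduced to `A` by some embedding of the
Hilbert cube into `Q`. -/
def UniversalFor {Q : Type} [MetricSpace Q] (Cl : Set HCube → Prop) (A : Set Q) : Prop :=
  ∀ M : Set HCube, Cl M → ∃ f : HCube → Q, IsEmbedding f ∧ f ⁻¹' A = M

/-- `A ⊆ Q` is strongly `M`-universal for the class `Cl` of subsets of the Hilbert cube. -/
def StronglyUniversalFor {Q : Type} [MetricSpace Q] (Cl : Set HCube → Prop)
    (A : Set Q) : Prop :=
  ∀ M : Set HCube, Cl M → ∀ K : Set HCube, IsCompact K →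
    ∀ f : HCube → Q, IsEmbedding f → IsZSet (f '' K) →
      ∀ ε : ℝ, 0 < ε → ∃ g : HCube → Q, IsEmbedding g ∧
        IsZSet (Set.range g) ∧ (∀ x ∈ K, g x = f x) ∧
        g ⁻¹' A \ K = M \ K ∧ ∀ x : HCube, dist (g x) (f x) < ε

/-- `A ⊆ Q` is an absorber for the class given by `ClH` (on the Hilbert cube) and
`ClQ` (on `Q`): it belongs to the class, is contained in a `σZ`-set, and is
strongly universal for the class. -/
def IsAbsorberFor {Q : Type} [MetricSpace Q] (ClH : Set HCube → Prop)
    (ClQ : Set Q → Prop) (A : Set Q) : Prop :=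
  ClQ A ∧ (∃ B : Set Q, IsSigmaZSet B ∧ A ⊆ B) ∧ StronglyUniversalFor ClH A

/-- `C` is a closed separator of the space `Z` between `A` and `B`. -/
def SeparatesBetween {Z : Type} [TopologicalSpace Z] (C A B : Set Z) : Prop :=
  IsClosed C ∧ ∃ U V : Set Z, IsOpen U ∧ IsOpen V ∧ A ⊆ U ∧ B ⊆ V ∧
    Disjoint U V ∧ Cᶜ = U ∪ V

/-- A compact metric space is strongly infinite-dimensional if it has an essential
sequence of pairs of disjoint closed sets. -/
def StronglyInfiniteDimensional (Z : Type) [TopologicalSpace Z] : Prop :=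
  ∃ A B : ℕ → Set Z, (∀ n, IsClosed (A n) ∧ IsClosed (B n) ∧ Disjoint (A n) (B n)) ∧
    ∀ C : ℕ → Set Z, (∀ n, SeparatesBetween (C n) (A n) (B n)) → (⋂ n, C n).Nonempty

/-- The family `W_n(Y)` of weakly infinite-dimensional compacta in `Y` of covering
dimension `≥ n`, in `2^Y`. -/
def WFam (Y : Type) [MetricSpace Y] (n : ℕ) : Set (Hyper Y) :=
  {K | ¬ StronglyInfiniteDimensional (K : Set Y) ∧ CovDimGE (K : Set Y) n}

/-- A compact metric space is a `C`-space. -/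
def IsCSpace (Z : Type) [MetricSpace Z] : Prop :=
  ∀ ε : ℕ → ℝ, (∀ i, 0 < ε i) →
    ∃ (k : ℕ) (V : Fin k → Set (Set Z)),
      (∀ i : Fin k, (V i).Finite ∧ (∀ v ∈ V i, IsOpen v ∧ Metric.diam v < ε i.1) ∧
        (V i).Pairwise Disjoint) ∧
      (⋃ i : Fin k, ⋃₀ V i) = Set.univ

/-- The family `C_n(Y)` of compacta in `Y` of covering dimension `≥ n` which are
`C`-spaces, in `2^Y`. -/
def CFam (Y : Type) [MetricSpace Y] (n : ℕ) : Set (Hyper Y) :=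
  {K | IsCSpace (K : Set Y) ∧ CovDimGE (K : Set Y) n}

/-- A space is strongly countable-dimensional if it is a countable union of closed
finite-dimensional subspaces. -/
def StronglyCountableDimensional (Z : Type) [TopologicalSpace Z] : Prop :=
  ∃ F : ℕ → Set Z, (∀ k, IsClosed (F k) ∧ ∃ m : ℕ, CovDimLE (F k) m) ∧ (⋃ k, F k) = Set.univ

/-- The family `SCD_n(Y)` of strongly countable-dimensional compacta in `Y` of
covering dimension `≥ n`, in `2^Y`. -/
def SCDFam (Y : Type) [MetricSpace Y] (n : ℕ) : Set (Hyper Y) :=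
  {K | StronglyCountableDimensional (K : Set Y) ∧ CovDimGE (K : Set Y) n}

/-- A compact metric space is hereditarily infinite-dimensional if it is
infinite-dimensional and each nonempty closed subspace is infinite-dimensional or
zero-dimensional. -/
def HereditarilyInfiniteDimensional (Z : Type) [TopologicalSpace Z] : Prop :=
  (∀ m : ℕ, ¬ CovDimLE Z m) ∧
  ∀ F : Set Z, IsClosed F → F.Nonempty → (∀ m : ℕ, ¬ CovDimLE F m) ∨ CovDimLE F 0

/-- `A` is `Π^1_1`-hard: every coanalytic subset of every zero-dimensional Polish space
continuously reduces to `A`. -/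
def Pi11Hard {Z : Type} [TopologicalSpace Z] (A : Set Z) : Prop :=
  ∀ (Y₀ : Type) (_ : TopologicalSpace Y₀), PolishSpace Y₀ →
    TopologicalSpace.IsTopologicalBasis {s : Set Y₀ | IsClopen s} →
    ∀ C : Set Y₀, IsCoanalytic C → ∃ ξ : Y₀ → Z, Continuous ξ ∧ ξ ⁻¹' A = C

/-- `A` is `Π^1_1`-complete: coanalytic and `Π^1_1`-hard. -/
def Pi11Complete {Z : Type} [TopologicalSpace Z] (A : Set Z) : Prop :=
  IsCoanalytic A ∧ Pi11Hard A


/-!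
A continuum `K` is aposyndetic iff for every `c > 0` there are `k` and `b > 0` such that every
`z ∈ K` has a compact `M ⊆ K`, a union of `k` compact connected sets, with `dist z M ≥ b` and
`diam (K \ M) ≤ c`. The definition gives such an `M = K \ U` for each `z`, with `b` depending on
`z`; a Lebesgue number of the cover by the sets `U` makes `b` and `k` uniform. Colocal
connectedness is the case `k = 1`. For fixed `k, b, c` the condition is closed in the
hyperspace: Hausdorff limits of continua are continua, the sets `M` range over the compact
hyperspace, and every point of a limit is a limit of points of the approximants. So `Apo(Y)` is
the open set of nondegenerate subcontinua intersected with `⋂ₙ ⋃_{m,k}` of closed sets, and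
likewise `Col(Y)`.
-/

section Fsigma

variable {Z : Type} [TopologicalSpace Z]

lemma isFsigma_iUnion {ι : Type*} [Countable ι] {F : ι → Set Z} (hF : ∀ i, IsClosed (F i)) :
    IsFsigma (⋃ i, F i) := by
  cases isEmpty_or_nonempty ι
  · exact ⟨fun _ => ∅, fun _ => isClosed_empty, by simp⟩
  · obtain ⟨e, he⟩ := exists_surjective_nat ι
    exact ⟨F ∘ e, fun n => hF (e n), (he.iUnion_comp F).symm⟩

lemma IsFsigma.inter {A B : Set Z} (hA : IsFsigma A) (hB : IsFsigma B) : IsFsigma (A ∩ B) := by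
  obtain ⟨F, hF, rfl⟩ := hA
  obtain ⟨G, hG, rfl⟩ := hB
  rw [iUnion_inter_iUnion, ← iUnion_prod' fun p : ℕ × ℕ => F p.1 ∩ G p.2]
  exact isFsigma_iUnion fun p => (hF p.1).inter (hG p.2)

lemma IsOpen.isFsigma [PerfectlyNormalSpace Z] {U : Set Z} (hU : IsOpen U) : IsFsigma U := by
  obtain ⟨G, hG, hUG⟩ := isGδ_iff_eq_iInter_nat.1 hU.isClosed_compl.isGδ
  exact ⟨fun n => (G n)ᶜ, fun n => (hG n).isClosed_compl,
    by rw [← compl_iInter, ← hUG, compl_compl]⟩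

lemma IsOpen.isFsigmaDelta_inter_iInter_iUnion [PerfectlyNormalSpace Z] {ι : Type*} [Countable ι]
    {U : Set Z} (hU : IsOpen U) {F : ℕ → ι → Set Z} (hF : ∀ n i, IsClosed (F n i)) :
    IsFsigmaDelta (U ∩ ⋂ n, ⋃ i, F n i) :=
  ⟨fun n => U ∩ ⋃ i, F n i, fun n => hU.isFsigma.inter (isFsigma_iUnion (hF n)),
    inter_iInter _ _⟩

end Fsigma

namespace TopologicalSpace

variable {α : Type*} [TopologicalSpace α]

lemma NonemptyCompacts.isOpen_setOf_nontrivial [T2Space α] :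
    IsOpen {K : NonemptyCompacts α | (K : Set α).Nontrivial} := by
  have : {K : NonemptyCompacts α | (K : Set α).Nontrivial} =
      (range ({·} : α → NonemptyCompacts α))ᶜ := by
    ext K
    rw [mem_compl_iff, ← not_iff_not, not_not, mem_ofPred_eq, Set.not_nontrivial_iff]
    refine ⟨fun h => ?_, ?_⟩
    · obtain ⟨x, hx⟩ := K.nonempty
      exact ⟨x, NonemptyCompacts.ext (h.eq_singleton_of_mem hx).symm⟩
    · rintro ⟨x, rfl⟩
      exact subsingleton_singleton
  rw [this, isOpen_compl_iff]
  exact NonemptyCompacts.isClosedEmbedding_singleton.isClosed_range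

namespace Compacts

lemma isClosed_setOf_forall_mem {X : Type*} [TopologicalSpace X] {f : X → Compacts α}
    (hf : Continuous f) {F : Set (X × α)} (hF : IsClosed F) :
    IsClosed {x | ∀ z ∈ f x, (x, z) ∈ F} := by
  rw [← isOpen_compl_iff, isOpen_iff_forall_mem_open]
  intro x hx
  simp only [mem_compl_iff, mem_ofPred_eq, not_forall] at hx
  obtain ⟨z, hz, hxz⟩ := hx
  obtain ⟨U, V, hU, hV, hxU, hzV, hUV⟩ := isOpen_prod_iff.1 hF.isOpen_compl x z hxz
  refine ⟨U ∩ f ⁻¹' {K | ((K : Set α) ∩ V).Nonempty}, ?_,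
    hU.inter ((isOpen_inter_nonempty_of_isOpen hV).preimage hf), hxU, z, hz, hzV⟩
  rintro x' ⟨hx'U, z', hz'K, hz'V⟩ h
  exact hUV ⟨hx'U, hz'V⟩ (h z' hz'K)

variable [T2Space α]

lemma isClosed_setOf_mem : IsClosed {p : Compacts α × α | p.2 ∈ p.1} := by
  have : {p : Compacts α × α | p.2 ∈ p.1} = {p | p.1 ⊔ {p.2} = p.1} := by
    ext p
    simp [← SetLike.coe_subset_coe]
  rw [this]
  exact isClosed_eq (continuous_fst.sup (continuous_singleton.comp continuous_snd)) continuous_fst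

lemma isClosed_setOf_subset :
    IsClosed {p : Compacts α × Compacts α | (p.2 : Set α) ⊆ p.1} := by
  simp_rw [SetLike.coe_subset_coe, ← sup_eq_left]
  exact isClosed_eq continuous_sup continuous_fst

lemma isClosed_setOf_isPreconnected : IsClosed {K : Compacts α | IsPreconnected (K : Set α)} := by
  rw [← isOpen_compl_iff, isOpen_iff_forall_mem_open]
  intro K hK
  obtain ⟨u, v, hu, hv, hKuv, huv, hKu, hKv⟩ : ∃ u v, IsClosed u ∧ IsClosed v ∧
      (K : Set α) ⊆ u ∪ v ∧ (K : Set α) ∩ (u ∩ v) = ∅ ∧ ¬ (K : Set α) ⊆ u ∧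
        ¬ (K : Set α) ⊆ v := by
    simpa [isPreconnected_iff_subset_of_disjoint_closed, not_or] using hK
  obtain ⟨U, V, hU, hV, huU, hvV, hUV⟩ := SeparatedNhds.of_isCompact_isCompact
    (K.isCompact.inter_right hu) (K.isCompact.inter_right hv)
    (disjoint_left.2 fun x hxu hxv => huv.subset ⟨hxu.1, hxu.2, hxv.2⟩)
  refine ⟨{L | (L : Set α) ⊆ U ∪ V} ∩ {L | ((L : Set α) ∩ U).Nonempty} ∩
      {L | ((L : Set α) ∩ V).Nonempty}, ?_, ?_, ?_⟩
  · rintro L ⟨⟨hLUV, hLU⟩, hLV⟩ hL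
    obtain ⟨x, -, hxU, hxV⟩ := hL U V hU hV hLUV hLU hLV
    exact hUV.le_bot ⟨hxU, hxV⟩
  · exact ((isOpen_subsets_of_isOpen (hU.union hV)).inter
      (isOpen_inter_nonempty_of_isOpen hU)).inter (isOpen_inter_nonempty_of_isOpen hV)
  · obtain ⟨x, hxK, hxu⟩ := not_subset.1 hKu
    obtain ⟨y, hyK, hyv⟩ := not_subset.1 hKv
    refine ⟨⟨fun z hz => ?_, ?_⟩, ?_⟩
    · rcases hKuv hz with h | h
      exacts [Or.inl (huU ⟨hz, h⟩), Or.inr (hvV ⟨hz, h⟩)]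
    · exact ⟨y, hyK, huU ⟨hyK, (hKuv hyK).resolve_right hyv⟩⟩
    · exact ⟨x, hxK, hvV ⟨hxK, (hKuv hxK).resolve_left hxu⟩⟩

end Compacts

end TopologicalSpace

section Components

variable {α : Type*} [TopologicalSpace α]

def IsUnionOfCompactPreconnected (k : ℕ) (M : Set α) : Prop :=
  ∃ L : Fin k → Set α, (∀ i, IsCompact (L i) ∧ IsPreconnected (L i)) ∧ M = ⋃ i, L i

namespace IsUnionOfCompactPreconnected

variable {k : ℕ} {M : Set α}

lemma isCompact (h : IsUnionOfCompactPreconnected k M) : IsCompact M := by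
  obtain ⟨L, hL, rfl⟩ := h
  exact isCompact_iUnion fun i => (hL i).1

lemma mono {k' : ℕ} (hk : k ≤ k') (h : IsUnionOfCompactPreconnected k M) :
    IsUnionOfCompactPreconnected k' M := by
  obtain ⟨L, hL, rfl⟩ := h
  refine ⟨fun j => if h : (j : ℕ) < k then L ⟨j, h⟩ else ∅, fun j => ?_, ?_⟩
  · dsimp only
    split_ifs
    exacts [hL _, ⟨isCompact_empty, isPreconnected_empty⟩]
  · ext x
    simp only [mem_iUnion]
    constructor
    · rintro ⟨i, hi⟩
      exact ⟨Fin.castLE hk i, by simpa [i.2] using hi⟩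
    · rintro ⟨j, hj⟩
      split_ifs at hj
      exacts [⟨_, hj⟩, hj.elim]

lemma image {β : Type*} [TopologicalSpace β] {f : α → β} (hf : Continuous f)
    (h : IsUnionOfCompactPreconnected k M) : IsUnionOfCompactPreconnected k (f '' M) := by
  obtain ⟨L, hL, rfl⟩ := h
  exact ⟨fun i => f '' L i, fun i => ⟨(hL i).1.image hf, (hL i).2.image f hf.continuousOn⟩,
    image_iUnion⟩

end IsUnionOfCompactPreconnected

lemma isUnionOfCompactPreconnected_one {M : Set α} :
    IsUnionOfCompactPreconnected 1 M ↔ IsCompact M ∧ IsPreconnected M := by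
  constructor
  · rintro ⟨L, hL, rfl⟩
    have h0 : (⋃ i, L i) = L 0 := by ext; simp [Fin.exists_fin_one]
    exact h0 ▸ hL 0
  · exact fun h => ⟨fun _ => M, fun _ => h, (iUnion_const M).symm⟩

lemma IsClosed.connectedComponentIn {T : Set α} (hT : IsClosed T) (x : α) :
    IsClosed (connectedComponentIn T x) := by
  by_cases hx : x ∈ T
  · exact isClosed_of_closure_subset <|
      isPreconnected_connectedComponentIn.closure.subset_connectedComponentIn
        (subset_closure (mem_connectedComponentIn hx))
        (closure_minimal (connectedComponentIn_subset T x) hT)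
  · rw [connectedComponentIn_eq_empty hx]
    exact isClosed_empty

lemma FinitelyManyComponents.exists_isUnionOfCompactPreconnected {Z : Type} [TopologicalSpace Z]
    [CompactSpace Z] {T : Set Z} (hT : IsClosed T) (h : FinitelyManyComponents T) :
    ∃ k, IsUnionOfCompactPreconnected k T := by
  obtain ⟨k, L, -, hL⟩ := h.fin_param
  have hLT : ∀ i, ∃ x ∈ T, L i = connectedComponentIn T x := fun i =>
    hL.subset (mem_range_self i)
  refine ⟨k, L, fun i => ?_, ?_⟩
  · obtain ⟨x, -, hx⟩ := hLT i
    rw [hx]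
    exact ⟨(hT.connectedComponentIn x).isCompact, isPreconnected_connectedComponentIn⟩
  · ext x
    refine ⟨fun hx => ?_, fun hx => ?_⟩
    · obtain ⟨i, hi⟩ : connectedComponentIn T x ∈ range L := hL.symm.subset ⟨x, hx, rfl⟩
      exact mem_iUnion.2 ⟨i, hi ▸ mem_connectedComponentIn hx⟩
    · obtain ⟨i, hxi⟩ := mem_iUnion.1 hx
      obtain ⟨y, -, hy⟩ := hLT i
      exact connectedComponentIn_subset T y (hy ▸ hxi)

lemma finitelyManyComponents_iUnion {Z : Type} [TopologicalSpace Z] {ι : Type*} [Finite ι]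
    {L : ι → Set Z} (hL : ∀ i, IsPreconnected (L i)) :
    FinitelyManyComponents (⋃ i, L i) := by
  refine (finite_iUnion fun i => Set.Subsingleton.finite
    (s := {C | ∃ x ∈ L i, C = connectedComponentIn (⋃ i, L i) x}) ?_).subset ?_
  · rintro C ⟨x, hx, rfl⟩ C' ⟨x', hx', rfl⟩
    exact connectedComponentIn_eq ((hL i).subset_connectedComponentIn hx (subset_iUnion L i) hx')
  · rintro C ⟨x, hx, rfl⟩
    obtain ⟨i, hi⟩ := mem_iUnion.1 hx
    exact mem_iUnion.2 ⟨i, x, hi, rfl⟩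

lemma TopologicalSpace.Compacts.isClosed_setOf_isUnionOfCompactPreconnected [CompactSpace α]
    [T2Space α] (k : ℕ) :
    IsClosed {M : Compacts α | IsUnionOfCompactPreconnected k (M : Set α)} := by
  have : {M : Compacts α | IsUnionOfCompactPreconnected k (M : Set α)} =
      (fun L : Fin k → Compacts α => Finset.univ.sup L) ''
        {L | ∀ i, IsPreconnected (L i : Set α)} := by
    ext M
    constructor
    · rintro ⟨L, hL, hM⟩
      refine ⟨fun i => ⟨L i, (hL i).1⟩, fun i => (hL i).2, ?_⟩
      ext1
      simp [hM, Compacts.coe_finset_sup]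
    · rintro ⟨L, hL, rfl⟩
      exact ⟨fun i => L i, fun i => ⟨(L i).isCompact, hL i⟩,
        by simp [Compacts.coe_finset_sup]⟩
  have hL : IsClosed {L : Fin k → Compacts α | ∀ i, IsPreconnected (L i : Set α)} := by
    simp_rw [ofPred_forall]
    exact isClosed_iInter fun i =>
      isClosed_setOf_isPreconnected.preimage (f := fun L : Fin k → Compacts α => L i)
        (continuous_apply i)
  rw [this]
  exact (hL.isCompact.image (by fun_prop)).isClosed

end Components

section CoNbhds

variable {Y : Type*} [MetricSpace Y]

/-- `S \ M` is a neighbourhood of `z` in `S` of diameter at most `c` containing the `b`-ball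
around `z`. -/
def IsSmallCoNbhd (b c : ℝ) (S : Set Y) (z : Y) (M : Set Y) : Prop :=
  M ⊆ S ∧ (∀ y ∈ M, b ≤ dist z y) ∧ ∀ y ∈ S \ M, ∀ y' ∈ S \ M, dist y y' ≤ c

def HasUniformCoNbhds (k : ℕ) (b c : ℝ) (S : Set Y) : Prop :=
  ∀ z ∈ S, ∃ M, IsUnionOfCompactPreconnected k M ∧ IsSmallCoNbhd b c S z M

lemma HasUniformCoNbhds.mono {k : ℕ} {b b' c c' : ℝ} {S : Set Y} (hb : b' ≤ b) (hc : c ≤ c')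
    (h : HasUniformCoNbhds k b c S) : HasUniformCoNbhds k b' c' S := by
  intro z hz
  obtain ⟨M, hM, hMS, hzM, hsmall⟩ := h z hz
  exact ⟨M, hM, hMS, fun y hy => hb.trans (hzM y hy),
    fun y hy y' hy' => (hsmall y hy y' hy').trans hc⟩

namespace TopologicalSpace.Compacts

lemma isClosed_setOf_isSmallCoNbhd (b c : ℝ) :
    IsClosed {q : (Compacts Y × Y) × Compacts Y | IsSmallCoNbhd b c q.1.1 q.1.2 q.2} := by
  have hsub : IsClosed {q : (Compacts Y × Y) × Compacts Y | (q.2 : Set Y) ⊆ q.1.1} :=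
    isClosed_setOf_subset.preimage
      (f := fun q : (Compacts Y × Y) × Compacts Y => (q.1.1, q.2)) (by fun_prop)
  have hfar : IsClosed {q : (Compacts Y × Y) × Compacts Y | ∀ y ∈ q.2, b ≤ dist q.1.2 y} :=
    isClosed_setOf_forall_mem continuous_snd (isClosed_le (f := fun _ => b)
      (g := fun p : ((Compacts Y × Y) × Compacts Y) × Y => dist p.1.1.2 p.2) continuous_const
      (by fun_prop))
  have hmem : ∀ f : ((Compacts Y × Y) × Compacts Y) × Y × Y → Y, Continuous f →
      IsClosed {p | f p ∈ p.1.2} := fun f hf =>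
    isClosed_setOf_mem.preimage
      (f := fun p : ((Compacts Y × Y) × Compacts Y) × Y × Y => (p.1.2, f p)) (by fun_prop)
  have hsmall : IsClosed {q : (Compacts Y × Y) × Compacts Y |
      ∀ p ∈ q.1.1 ×ˢ q.1.1,
        (q, p) ∈ {x | x.2.1 ∈ x.1.2 ∨ x.2.2 ∈ x.1.2 ∨ dist x.2.1 x.2.2 ≤ c}} :=
    isClosed_setOf_forall_mem (f := fun q : (Compacts Y × Y) × Compacts Y => q.1.1 ×ˢ q.1.1)
      (continuous_prod.comp (continuous_fst.fst.prodMk continuous_fst.fst))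
      ((hmem _ (by fun_prop)).union ((hmem _ (by fun_prop)).union
        (isClosed_le (f := fun x : ((Compacts Y × Y) × Compacts Y) × Y × Y => dist x.2.1 x.2.2)
          (by fun_prop) continuous_const)))
  convert hsub.inter (hfar.inter hsmall) using 1
  ext q
  simp only [IsSmallCoNbhd, mem_ofPred_eq, mem_inter_iff, coe_prod, ← SetLike.mem_coe, mem_prod,
    Set.mem_sdiff, Prod.forall, and_imp]
  grind

lemma isClosed_setOf_hasUniformCoNbhds [CompactSpace Y] (k : ℕ) (b c : ℝ) :
    IsClosed {K : Compacts Y | HasUniformCoNbhds k b c (K : Set Y)} := by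
  set E := {q : (Compacts Y × Y) × Compacts Y |
    IsUnionOfCompactPreconnected k (q.2 : Set Y) ∧ IsSmallCoNbhd b c q.1.1 q.1.2 q.2}
  have hE : IsClosed E := ((isClosed_setOf_isUnionOfCompactPreconnected k).preimage
    continuous_snd).inter (isClosed_setOf_isSmallCoNbhd b c)
  have : {K : Compacts Y | HasUniformCoNbhds k b c (K : Set Y)} =
      {K | ∀ z ∈ K, (K, z) ∈ Prod.fst '' E} := by
    ext K
    refine forall₂_congr fun z hz => ⟨?_, ?_⟩
    · rintro ⟨M, hM, hsmall⟩
      exact ⟨((K, z), ⟨M, hM.isCompact⟩), ⟨hM, hsmall⟩, rfl⟩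
    · rintro ⟨⟨_, M⟩, hM, rfl⟩
      exact ⟨M, hM⟩
  rw [this]
  exact isClosed_setOf_forall_mem continuous_id (isClosedMap_fst_of_compactSpace E hE)

end TopologicalSpace.Compacts

lemma exists_hasUniformCoNbhds {R : ℕ → Set Y → Prop}
    (hR : ∀ {k k' M}, k ≤ k' → R k M → R k' M) {S : Set Y} (hS : IsCompact S) {c : ℝ}
    (h : ∀ z : S, ∃ k, ∃ U : Set S, IsOpen U ∧ z ∈ U ∧ diam U < c ∧
      R k ((↑) '' Uᶜ)) :
    ∃ k, ∃ b > 0, ∀ z ∈ S, ∃ M, R k M ∧ IsSmallCoNbhd b c S z M := by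
  have := isCompact_iff_compactSpace.mp hS
  let Witness (k : ℕ) (U : Set S) : Prop := IsOpen U ∧ diam U < c ∧ R k ((↑) '' Uᶜ)
  have hcover : univ ⊆ ⋃ k, ⋃ U : {U // Witness k U}, (U : Set S) := fun z _ => by
    obtain ⟨k, U, hU, hzU, hUc, hRU⟩ := h z
    exact mem_iUnion₂.2 ⟨k, ⟨U, hU, hUc, hRU⟩, hzU⟩
  obtain ⟨k, hk⟩ := isCompact_univ.elim_directed_cover _ (fun k => isOpen_iUnion fun U => U.2.1)
    hcover (Monotone.directed_le fun k k' hkk' =>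
      iUnion_mono' fun U => ⟨⟨U, U.2.1, U.2.2.1, hR hkk' U.2.2.2⟩, subset_rfl⟩)
  obtain ⟨b, hb, hball⟩ :=
    lebesgue_number_lemma_of_metric isCompact_univ (fun U : {U // Witness k U} => U.2.1) hk
  refine ⟨k, b, hb, fun z hz => ?_⟩
  obtain ⟨⟨U, _, hUc, hRU⟩, hzU⟩ := hball ⟨z, hz⟩ trivial
  have hmem {y : Y} (hy : y ∈ S \ (↑) '' Uᶜ) : (⟨y, hy.1⟩ : S) ∈ U :=
    by_contra fun h => hy.2 ⟨_, h, rfl⟩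
  refine ⟨_, hRU, Subtype.coe_image_subset S _, ?_, fun y hy y' hy' => ?_⟩
  · rintro _ ⟨y, hyU, rfl⟩
    exact not_lt.1 fun hzy => hyU (hzU (mem_ball'.2 hzy))
  · exact (dist_le_diam_of_mem isBounded_of_compactSpace (hmem hy) (hmem hy')).trans hUc.le

end CoNbhds

section Subspace

variable {Y : Type} [MetricSpace Y] {S : Set Y}

lemma IsPreconnected.preimage_val {L : Set Y} (hL : IsPreconnected L) (hLS : L ⊆ S) :
    IsPreconnected ((↑) ⁻¹' L : Set S) := by
  rwa [← IsInducing.subtypeVal.isPreconnected_image, Subtype.image_preimage_coe,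
    inter_eq_right.2 hLS]

lemma IsSmallCoNbhd.compl_preimage_val {b c : ℝ} {z : S} {M : Set Y} (hM : IsClosed M)
    (hb : 0 < b) (h : IsSmallCoNbhd b c S z M) :
    IsOpen ((↑) ⁻¹' M : Set S)ᶜ ∧ z ∈ ((↑) ⁻¹' M : Set S)ᶜ ∧
      diam ((↑) ⁻¹' M : Set S)ᶜ ≤ c := by
  obtain ⟨-, hzM, hsmall⟩ := h
  have hz : (z : Y) ∉ M := fun hz => (hzM z hz).not_gt (by simpa using hb)
  exact ⟨(hM.preimage continuous_subtype_val).isOpen_compl, hz,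
    diam_le_of_forall_dist_le (dist_nonneg.trans (hsmall z ⟨z.2, hz⟩ z ⟨z.2, hz⟩))
      fun x hx x' hx' => hsmall x ⟨x.2, hx⟩ x' ⟨x'.2, hx'⟩⟩

theorem aposyndetic_iff (hS : IsCompact S) :
    Aposyndetic S ↔ ∀ c > 0, ∃ b > 0, ∃ k, HasUniformCoNbhds k b c S := by
  have := isCompact_iff_compactSpace.mp hS
  constructor
  · intro h c hc
    obtain ⟨k, b, hb, hk⟩ := exists_hasUniformCoNbhds (R := IsUnionOfCompactPreconnected)
      (fun hkk' h => h.mono hkk') hS fun z => by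
        obtain ⟨U, hU, hzU, hUc, hfin⟩ := h c hc z
        obtain ⟨k, hk⟩ := hfin.exists_isUnionOfCompactPreconnected hU.isClosed_compl
        exact ⟨k, U, hU, hzU, hUc, hk.image continuous_subtype_val⟩
    exact ⟨b, hb, k, hk⟩
  · intro h ε hε z
    obtain ⟨b, hb, k, hk⟩ := h (ε / 2) (half_pos hε)
    obtain ⟨M, hM, hsmall⟩ := hk z z.2
    obtain ⟨hUo, hzU, hUc⟩ := hsmall.compl_preimage_val hM.isCompact.isClosed hb
    refine ⟨_, hUo, hzU, hUc.trans_lt (half_lt_self hε), ?_⟩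
    obtain ⟨L, hL, rfl⟩ := hM
    rw [compl_compl, preimage_iUnion]
    exact finitelyManyComponents_iUnion fun i =>
      (hL i).2.preimage_val ((subset_iUnion L i).trans hsmall.1)

theorem colocallyConnected_iff (hS : IsCompact S) :
    ColocallyConnected S ↔ ∀ c > 0, ∃ b > 0, HasUniformCoNbhds 1 b c S := by
  have := isCompact_iff_compactSpace.mp hS
  constructor
  · intro h c hc
    obtain ⟨-, b, hb, hk⟩ :=
      exists_hasUniformCoNbhds (R := fun _ => IsUnionOfCompactPreconnected 1) (fun _ h => h) hS
        fun z => by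
          obtain ⟨U, hU, hzU, hUc, hconn⟩ := h c hc z
          exact ⟨0, U, hU, hzU, hUc, isUnionOfCompactPreconnected_one.2
            ⟨hU.isClosed_compl.isCompact.image continuous_subtype_val,
              hconn.image _ continuous_subtype_val.continuousOn⟩⟩
    exact ⟨b, hb, hk⟩
  · intro h ε hε z
    obtain ⟨b, hb, hk⟩ := h (ε / 2) (half_pos hε)
    obtain ⟨M, hM, hsmall⟩ := hk z z.2
    obtain ⟨hUo, hzU, hUc⟩ := hsmall.compl_preimage_val hM.isCompact.isClosed hb
    refine ⟨_, hUo, hzU, hUc.trans_lt (half_lt_self hε), ?_⟩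
    rw [compl_compl]
    exact (isUnionOfCompactPreconnected_one.1 hM).2.preimage_val hsmall.1

end Subspace

lemma forall_pos_exists_pos_iff_forall_nat {P : ℝ → ℝ → Prop}
    (hP : ∀ ⦃b b' c c'⦄, b' ≤ b → c ≤ c' → P b c → P b' c') :
    (∀ c > 0, ∃ b > 0, P b c) ↔ ∀ n : ℕ, ∃ m : ℕ, P (1 / (m + 1)) (1 / (n + 1)) := by
  constructor
  · intro h n
    obtain ⟨b, hb, hPb⟩ := h _ Nat.one_div_pos_of_nat
    obtain ⟨m, hm⟩ := exists_nat_one_div_lt hb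
    exact ⟨m, hP hm.le le_rfl hPb⟩
  · intro h c hc
    obtain ⟨n, hn⟩ := exists_nat_one_div_lt hc
    obtain ⟨m, hPm⟩ := h n
    exact ⟨_, Nat.one_div_pos_of_nat, hP le_rfl hn.le hPm⟩

/-- For every compact metric space `Y`, the families `Apo(Y)` and `Col(Y)`
of nondegenerate aposyndetic (resp. colocally connected) subcontinua of `Y` are
`F_{σδ}`-subsets of the hyperspace `C(Y)`. -/
theorem statement0 (Y : Type) [MetricSpace Y] [CompactSpace Y] :
    IsFsigmaDelta (Apo Y) ∧ IsFsigmaDelta (Col Y) := by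
  have hU : IsOpen {K : Subcontinua Y | (K.1 : Set Y).Nontrivial} :=
    NonemptyCompacts.isOpen_setOf_nontrivial.preimage continuous_subtype_val
  have hF (k : ℕ) (b c : ℝ) :
      IsClosed {K : Subcontinua Y | HasUniformCoNbhds k b c (K.1 : Set Y)} :=
    (Compacts.isClosed_setOf_hasUniformCoNbhds k b c).preimage
      (NonemptyCompacts.continuous_toCompacts.comp continuous_subtype_val)
  constructor
  · convert hU.isFsigmaDelta_inter_iInter_iUnion
      fun n (mk : ℕ × ℕ) => hF mk.2 (1 / (mk.1 + 1)) (1 / (n + 1)) using 1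
    ext K
    rw [Apo, mem_ofPred_eq, aposyndetic_iff K.1.isCompact, forall_pos_exists_pos_iff_forall_nat
      fun _ _ _ _ hb hc ⟨k, hk⟩ => ⟨k, hk.mono hb hc⟩]
    simp [Prod.exists]
  · convert hU.isFsigmaDelta_inter_iInter_iUnion
      fun n (m : ℕ) => hF 1 (1 / (m + 1)) (1 / (n + 1)) using 1
    ext K
    rw [Col, mem_ofPred_eq, colocallyConnected_iff K.1.isCompact,
      forall_pos_exists_pos_iff_forall_nat fun _ _ _ _ hb hc hk => hk.mono hb hc]
    simp
end

section
/- If X is a locally connected continuum, then the family S(X) of all closed separators of X is an F_σ-subset of the hyperspace 2^X. -/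
open Topology TopologicalSpace Metric Set Filter

/-!
In a locally connected space the components of an open set are open, so a closed set `K`
separates `X` iff two points of `X \ K` lie in different components of `X \ K`. Let `F δ` be
the family of those `K` for which such points can be chosen at distance `≥ δ` from `K`; then
`S(X) = ⋃ₙ F (1 / (n + 1))`. Each `F δ` is the projection, along the compact factor `X × X`,
of a closed subset of `X × X × 2^X`. Closedness comes down to the condition "`y` lies in the
component of `x` in `X \ K`" being open in `(x, y, K)`: that component is the increasing union
of the components of `x` in `{z | δ < d(z, K)}`, so one of these already contains `y`, and it
avoids every `K'` within Hausdorff distance `δ` of `K`.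
-/

section LocallyConnected

variable {X : Type*} [TopologicalSpace X]

theorem disjoint_connectedComponentIn_of_notMem {F : Set X} {x z : X}
    (hz : z ∉ connectedComponentIn F x) :
    Disjoint (connectedComponentIn F z) (connectedComponentIn F x) := by
  refine Set.disjoint_left.mpr fun w hwz hwx => hz ?_
  rw [connectedComponentIn_eq hwx, ← connectedComponentIn_eq hwz]
  exact mem_connectedComponentIn (connectedComponentIn_nonempty_iff.mp ⟨w, hwz⟩)

variable [LocallyConnectedSpace X]

theorem IsOpen.diff_connectedComponentIn {O : Set X} (hO : IsOpen O) (x : X) :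
    IsOpen (O \ connectedComponentIn O x) := by
  refine isOpen_iff_mem_nhds.mpr fun z ⟨hzO, hz⟩ => ?_
  refine Filter.mem_of_superset
    (hO.connectedComponentIn.mem_nhds (mem_connectedComponentIn hzO)) (subset_sdiff.mpr
      ⟨connectedComponentIn_subset O z, disjoint_connectedComponentIn_of_notMem hz⟩)

theorem connectedComponentIn_iUnion_of_directed {ι : Sort*} {U : ι → Set X}
    (hU : ∀ i, IsOpen (U i)) (hd : Directed (· ⊆ ·) U) (x : X) :
    connectedComponentIn (⋃ i, U i) x = ⋃ i, connectedComponentIn (U i) x := by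
  refine Subset.antisymm ?_
    (iUnion_subset fun i => connectedComponentIn_mono x (subset_iUnion U i))
  set A := ⋃ i, connectedComponentIn (U i) x
  have hA : IsOpen A := isOpen_iUnion fun i => (hU i).connectedComponentIn
  have hB : IsOpen ((⋃ i, U i) \ A) := by
    refine isOpen_iff_mem_nhds.mpr fun z ⟨hz, hzA⟩ => ?_
    obtain ⟨i, hzi⟩ := mem_iUnion.mp hz
    refine Filter.mem_of_superset
      ((hU i).connectedComponentIn.mem_nhds (mem_connectedComponentIn hzi)) fun w hw => ?_
    refine ⟨mem_iUnion.mpr ⟨i, connectedComponentIn_subset _ _ hw⟩, fun hwA => ?_⟩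
    obtain ⟨j, hwj⟩ := mem_iUnion.mp hwA
    obtain ⟨k, hik, hjk⟩ := hd i j
    have hzk : z ∉ connectedComponentIn (U k) x := fun h => hzA (mem_iUnion.mpr ⟨k, h⟩)
    exact disjoint_connectedComponentIn_of_notMem hzk |>.notMem_of_mem_left
      (connectedComponentIn_mono z hik hw) (connectedComponentIn_mono x hjk hwj)
  rcases (connectedComponentIn (⋃ i, U i) x).eq_empty_or_nonempty with h | h
  · simp [h]
  obtain ⟨i, hxi⟩ := mem_iUnion.mp (connectedComponentIn_nonempty_iff.mp h)
  exact isPreconnected_connectedComponentIn.subset_left_of_subset_union hA hB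
    disjoint_sdiff_right (fun w hw => (em (w ∈ A)).imp id fun hwA =>
      ⟨connectedComponentIn_subset _ _ hw, hwA⟩)
    ⟨x, mem_connectedComponentIn (mem_iUnion.mpr ⟨i, hxi⟩),
      mem_iUnion.mpr ⟨i, mem_connectedComponentIn hxi⟩⟩

end LocallyConnected

theorem isClosedSeparator_iff_exists_notMem_connectedComponentIn {X : Type} [TopologicalSpace X]
    [LocallyConnectedSpace X] {K : Set X} (hK : IsClosed K) :
    IsClosedSeparator K ↔ ∃ x ∉ K, ∃ y ∉ K, y ∉ connectedComponentIn Kᶜ x := by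
  constructor
  · rintro ⟨-, U, V, hU, hV, ⟨x, hx⟩, ⟨y, hy⟩, hUV, hKUV⟩
    have hxK : x ∈ Kᶜ := hKUV ▸ Or.inl hx
    have hCU : connectedComponentIn Kᶜ x ⊆ U :=
      isPreconnected_connectedComponentIn.subset_left_of_subset_union hU hV hUV
        (hKUV ▸ connectedComponentIn_subset _ _) ⟨x, mem_connectedComponentIn hxK, hx⟩
    exact ⟨x, hxK, y, (hKUV ▸ Or.inr hy : y ∈ Kᶜ),
      fun hyC => hUV.notMem_of_mem_left (hCU hyC) hy⟩
  · rintro ⟨x, hx, y, hy, hyx⟩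
    exact ⟨hK, connectedComponentIn Kᶜ x, Kᶜ \ connectedComponentIn Kᶜ x,
      hK.isOpen_compl.connectedComponentIn, hK.isOpen_compl.diff_connectedComponentIn x,
      ⟨x, mem_connectedComponentIn hx⟩, ⟨y, hy, hyx⟩, disjoint_sdiff_right,
      (union_sdiff_cancel (connectedComponentIn_subset _ _)).symm⟩

section Metric

variable {X : Type*} [MetricSpace X] [LocallyConnectedSpace X]

theorem exists_mem_connectedComponentIn_setOf_lt_infDist {K : Set X} (hK : IsClosed K)
    (hK₀ : K.Nonempty) {x y : X} (hy : y ∈ connectedComponentIn Kᶜ x) :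
    ∃ δ > 0, y ∈ connectedComponentIn {z | δ < infDist z K} x := by
  have hKc : Kᶜ = ⋃ n : ℕ, {z | 1 / ((n : ℝ) + 1) < infDist z K} := by
    ext z
    simp only [mem_compl_iff, hK.notMem_iff_infDist_pos hK₀, mem_iUnion, mem_ofPred_eq]
    exact ⟨exists_nat_one_div_lt, fun ⟨n, hn⟩ => lt_trans (by positivity) hn⟩
  have hmono : Monotone fun n : ℕ => {z | 1 / ((n : ℝ) + 1) < infDist z K} :=
    fun m n hmn z hz => lt_of_le_of_lt (by gcongr : 1 / ((n : ℝ) + 1) ≤ 1 / ((m : ℝ) + 1)) hz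
  rw [hKc, connectedComponentIn_iUnion_of_directed
    (fun n => isOpen_lt continuous_const (continuous_infDist_pt K)) hmono.directed_le] at hy
  obtain ⟨n, hn⟩ := mem_iUnion.mp hy
  exact ⟨_, by positivity, hn⟩

theorem isOpen_setOf_mem_connectedComponentIn_compl :
    IsOpen {p : (X × X) × NonemptyCompacts X |
      p.1.2 ∈ connectedComponentIn (p.2 : Set X)ᶜ p.1.1} := by
  refine isOpen_iff_mem_nhds.mpr fun ⟨⟨x, y⟩, K⟩ hy => ?_
  obtain ⟨δ, hδ, hyC⟩ :=
    exists_mem_connectedComponentIn_setOf_lt_infDist K.isCompact.isClosed K.nonempty hy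
  set C := connectedComponentIn {z | δ < infDist z K} x
  have hC : IsOpen C := (isOpen_lt continuous_const (continuous_infDist_pt _)).connectedComponentIn
  have hxC : x ∈ C := mem_connectedComponentIn (connectedComponentIn_nonempty_iff.mp ⟨y, hyC⟩)
  have hCK : ∀ K' ∈ ball K δ, C ⊆ (K' : Set X)ᶜ := fun K' hK' p hpC hpK' => by
    have : infDist p K ≤ dist K' K := infDist_le_hausdorffDist_of_mem hpK'
      (hausdorffEDist_ne_top_of_nonempty_of_bounded K'.nonempty K.nonempty
        K'.isCompact.isBounded K.isCompact.isBounded)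
    exact (connectedComponentIn_subset _ _ hpC).not_ge (this.trans (mem_ball.mp hK').le)
  filter_upwards [prod_mem_nhds (prod_mem_nhds (hC.mem_nhds hxC) (hC.mem_nhds hyC))
    (ball_mem_nhds K hδ)] with ⟨⟨x', y'⟩, K'⟩ ⟨⟨hx', hy'⟩, hK'⟩
  exact isPreconnected_connectedComponentIn.subset_connectedComponentIn hx' (hCK K' hK') hy'

end Metric

def SepFamAtDist (X : Type) [MetricSpace X] (δ : ℝ) : Set (Hyper X) :=
  {K | ∃ x y : X, δ ≤ infDist x K ∧ δ ≤ infDist y K ∧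
    y ∉ connectedComponentIn (K : Set X)ᶜ x}

theorem isClosed_sepFamAtDist (X : Type) [MetricSpace X] [CompactSpace X]
    [LocallyConnectedSpace X] (δ : ℝ) : IsClosed (SepFamAtDist X δ) := by
  have hdist (f : (X × X) × Hyper X → X) (hf : Continuous f) :
      IsClosed {p | δ ≤ infDist (f p) p.2} :=
    isClosed_le continuous_const <| Continuous.comp (f := fun p => (f p, p.2))
      lipschitz_infDist.continuous (hf.prodMk continuous_snd)
  have hE := ((hdist _ continuous_fst.fst).inter (hdist _ continuous_fst.snd)).inter
    isOpen_setOf_mem_connectedComponentIn_compl.isClosed_compl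
  have hproj : SepFamAtDist X δ = Prod.snd ''
      ({p : (X × X) × Hyper X | δ ≤ infDist p.1.1 p.2} ∩ {p | δ ≤ infDist p.1.2 p.2} ∩
      {p | p.1.2 ∈ connectedComponentIn (p.2 : Set X)ᶜ p.1.1}ᶜ) := by
    ext K
    simp [SepFamAtDist, and_assoc]
  exact hproj ▸ isClosedMap_snd_of_compactSpace _ hE

theorem sepFam_eq_iUnion_sepFamAtDist (X : Type) [MetricSpace X] [LocallyConnectedSpace X] :
    SepFam X = ⋃ n : ℕ, SepFamAtDist X (1 / ((n : ℝ) + 1)) := by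
  ext K
  have hK := K.isCompact.isClosed
  simp only [SepFam, SepFamAtDist, mem_ofPred_eq, mem_iUnion,
    isClosedSeparator_iff_exists_notMem_connectedComponentIn hK]
  constructor
  · rintro ⟨x, hx, y, hy, hyx⟩
    obtain ⟨n, hn⟩ := exists_nat_one_div_lt <| lt_min
      ((hK.notMem_iff_infDist_pos K.nonempty).mp hx) ((hK.notMem_iff_infDist_pos K.nonempty).mp hy)
    exact ⟨n, x, y, (hn.trans_le (min_le_left _ _)).le, (hn.trans_le (min_le_right _ _)).le,
      hyx⟩
  · rintro ⟨n, x, y, hx, hy, hyx⟩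
    have hpos : (0 : ℝ) < 1 / ((n : ℝ) + 1) := by positivity
    have hnotMem {z : X} (hz : 1 / ((n : ℝ) + 1) ≤ infDist z K) : z ∉ (K : Set X) :=
      fun hzK => (hpos.trans_le hz).ne' (infDist_zero_of_mem hzK)
    exact ⟨x, hnotMem hx, y, hnotMem hy, hyx⟩

theorem statement5_general (X : Type) [MetricSpace X] [CompactSpace X]
    [LocallyConnectedSpace X] :
    IsFsigma (SepFam X) :=
  ⟨_, fun _ => isClosed_sepFamAtDist X _, sepFam_eq_iUnion_sepFamAtDist X⟩

/-- If `X` is a locally connected continuum, then the family `S(X)` of all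
closed separators of `X` is an `F_σ`-subset of the hyperspace `2^X`. -/
theorem statement5 (X : Type) [MetricSpace X] [CompactSpace X] [ConnectedSpace X]
    [Nonempty X] [LocallyConnectedSpace X] :
    IsFsigma (SepFam X) :=
  statement5_general X
end

section
/- For every compact locally connected metric space Y, the family of all strongly infinite-dimensional compacta contained in Y is an analytic subset of the hyperspace 2^Y. -/
open Topology TopologicalSpace Metric Set Filter

/-! A compactum `K ⊆ Y` is strongly infinite-dimensional iff it is the first coordinate of a
triple `(K, (Aₙ), (Bₙ))` of compacta with `Aₙ, Bₙ ⊆ K` disjoint such that every finite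
subfamily is essential in `K`, partitions being cut out by disjoint open sets of `Y`. Complete
normality of `Y` lets every partition of `K` be cut out in this way, and compactness of `K`
passes from finite subfamilies to the whole sequence. For fixed open sets the condition on the
triple says that an open condition implies a closed one in the Vietoris topology, so the
triples form a Borel subset of a Polish space and their projection is analytic. -/

section SeparatesBetween

variable {Z : Type} [TopologicalSpace Z]

theorem separatesBetween_compl_union {A B U V : Set Z} (hU : IsOpen U) (hV : IsOpen V)
    (hUV : Disjoint U V) (hAU : A ⊆ U) (hBV : B ⊆ V) : SeparatesBetween (U ∪ V)ᶜ A B :=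
  ⟨(hU.union hV).isClosed_compl, U, V, hU, hV, hAU, hBV, hUV, compl_compl _⟩

theorem exists_separatesBetween [NormalSpace Z] {A B : Set Z} (hA : IsClosed A)
    (hB : IsClosed B) (hAB : Disjoint A B) : ∃ C : Set Z, SeparatesBetween C A B := by
  obtain ⟨U, V, hU, hV, hAU, hBV, hUV⟩ := normal_separation hA hB hAB
  exact ⟨_, separatesBetween_compl_union hU hV hUV hAU hBV⟩

/-- Disjoint relatively open subsets of `K` are separated in `Z`: neither meets the closure
of the other. -/
theorem separatedNhds_image_val [CompletelyNormalSpace Z] {K : Set Z} {U V : Set K}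
    (hU : IsOpen U) (hV : IsOpen V) (hUV : Disjoint U V) :
    SeparatedNhds ((↑) '' U : Set Z) ((↑) '' V) := by
  refine separatedNhds_iff_disjoint.2 (completely_normal ?_ ?_)
  · rw [disjoint_image_right, ← IsInducing.subtypeVal.closure_eq_preimage_closure_image]
    exact hUV.closure_left hV
  · rw [disjoint_image_left, ← IsInducing.subtypeVal.closure_eq_preimage_closure_image]
    exact hUV.closure_right hU

theorem SeparatesBetween.exists_ambient_isOpen [CompletelyNormalSpace Z] {K : Set Z}
    {C A B : Set K} (h : SeparatesBetween C A B) :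
    ∃ U V : Set Z, IsOpen U ∧ IsOpen V ∧ Disjoint U V ∧ (↑) '' A ⊆ U ∧ (↑) '' B ⊆ V ∧
      (↑) ⁻¹' (U ∪ V)ᶜ ⊆ C := by
  obtain ⟨-, U', V', hU', hV', hAU', hBV', hUV', hC⟩ := h
  obtain ⟨U, V, hU, hV, hU'U, hV'V, hUV⟩ := separatedNhds_image_val hU' hV' hUV'
  refine ⟨U, V, hU, hV, hUV, (image_mono hAU').trans hU'U, (image_mono hBV').trans hV'V,
    fun x hx ↦ ?_⟩
  by_contra hxC
  rw [← mem_compl_iff, hC] at hxC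
  exact hx (union_subset_union (image_subset_iff.1 hU'U) (image_subset_iff.1 hV'V) hxC)

end SeparatesBetween

section Essential

variable {Y : Type} [TopologicalSpace Y]

/-- Every finite subfamily of `(A n, B n)` is essential in `K`, with the partitions of `K`
cut out by disjoint open sets of the ambient space. -/
def IsFinitelyEssential (K : Set Y) (A B : ℕ → Set Y) : Prop :=
  ∀ (s : Finset ℕ) (U V : ℕ → Set Y), (∀ n, IsOpen (U n) ∧ IsOpen (V n) ∧ Disjoint (U n) (V n)) →
    (∀ n ∈ s, A n ⊆ U n ∧ B n ⊆ V n) → (K ∩ ⋂ n ∈ s, (U n ∪ V n)ᶜ).Nonempty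

theorem isClosed_setOf_isFinitelyEssential :
    IsClosed {p : Compacts Y × (ℕ → Compacts Y) × (ℕ → Compacts Y) |
      IsFinitelyEssential (p.1 : Set Y) (fun n ↦ p.2.1 n) (fun n ↦ p.2.2 n)} := by
  simp only [IsFinitelyEssential, ofPred_forall]
  refine isClosed_iInter fun s ↦ isClosed_iInter fun U ↦ isClosed_iInter fun V ↦
    isClosed_iInter fun hUV ↦ isClosed_imp ?_ ?_
  · have hA (n : ℕ) := (Compacts.isOpen_subsets_of_isOpen (hUV n).1).preimage
      (f := fun p : Compacts Y × (ℕ → Compacts Y) × (ℕ → Compacts Y) ↦ p.2.1 n) (by fun_prop)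
    have hB (n : ℕ) := (Compacts.isOpen_subsets_of_isOpen (hUV n).2.1).preimage
      (f := fun p : Compacts Y × (ℕ → Compacts Y) × (ℕ → Compacts Y) ↦ p.2.2 n) (by fun_prop)
    convert isOpen_biInter_finset (s := s) fun n _ ↦ (hA n).inter (hB n) using 1
    ext
    simp
  · refine (Compacts.isClosed_inter_nonempty_of_isClosed ?_).preimage continuous_fst
    exact isClosed_biInter fun n _ ↦ ((hUV n).1.union (hUV n).2.1).isClosed_compl

theorem Compacts.isClosed_setOf_subset [T2Space Y] :
    IsClosed {p : Compacts Y × Compacts Y | (p.1 : Set Y) ⊆ p.2} := by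
  have : {p : Compacts Y × Compacts Y | (p.1 : Set Y) ⊆ p.2} = {p | p.1 ⊔ p.2 = p.2} := by
    ext p
    rw [mem_ofPred_eq, mem_ofPred_eq, ← SetLike.coe_set_eq, Compacts.coe_sup, union_eq_right]
  rw [this]
  exact isClosed_eq (continuous_fst.sup continuous_snd) continuous_snd

end Essential

section StronglyInfiniteDimensional

variable {Y : Type} [TopologicalSpace Y]

variable (Y) in
def essentialTriples : Set (Compacts Y × (ℕ → Compacts Y) × (ℕ → Compacts Y)) :=
  {p | (∀ n, (p.2.1 n : Set Y) ⊆ p.1 ∧ (p.2.2 n : Set Y) ⊆ p.1 ∧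
      Disjoint (p.2.1 n : Set Y) (p.2.2 n)) ∧
    IsFinitelyEssential (p.1 : Set Y) (fun n ↦ p.2.1 n) (fun n ↦ p.2.2 n)}

theorem StronglyInfiniteDimensional.exists_mem_essentialTriples [T5Space Y] {K : Compacts Y}
    (h : StronglyInfiniteDimensional (K : Set Y)) :
    ∃ A B : ℕ → Compacts Y, (K, A, B) ∈ essentialTriples Y := by
  obtain ⟨A, B, hAB, hess⟩ := h
  choose C₀ hC₀ using fun n ↦ exists_separatesBetween (hAB n).1 (hAB n).2.1 (hAB n).2.2
  refine ⟨fun n ↦ ⟨(↑) '' A n, (hAB n).1.isCompact.image continuous_subtype_val⟩,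
    fun n ↦ ⟨(↑) '' B n, (hAB n).2.1.isCompact.image continuous_subtype_val⟩,
    fun n ↦ ⟨Subtype.coe_image_subset _ _, Subtype.coe_image_subset _ _,
      (disjoint_image_iff Subtype.val_injective).2 (hAB n).2.2⟩, ?_⟩
  intro s U V hUV hsub
  let C n : Set K := if n ∈ s then ((↑) ⁻¹' (U n ∪ V n))ᶜ else C₀ n
  have hC n : SeparatesBetween (C n) (A n) (B n) := by
    by_cases hn : n ∈ s
    · simp only [C, if_pos hn, preimage_union]
      exact separatesBetween_compl_union ((hUV n).1.preimage continuous_subtype_val)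
        ((hUV n).2.1.preimage continuous_subtype_val) ((hUV n).2.2.preimage _)
        (image_subset_iff.1 (hsub n hn).1) (image_subset_iff.1 (hsub n hn).2)
    · simpa only [C, if_neg hn] using hC₀ n
  obtain ⟨x, hx⟩ := hess C hC
  refine ⟨x, x.2, mem_iInter₂.2 fun n hn ↦ ?_⟩
  simpa [C, hn] using mem_iInter.1 hx n

theorem stronglyInfiniteDimensional_of_mem_essentialTriples [T5Space Y] {K : Compacts Y}
    {A B : ℕ → Compacts Y} (h : (K, A, B) ∈ essentialTriples Y) :
    StronglyInfiniteDimensional (K : Set Y) := by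
  obtain ⟨hAB, hess⟩ := h
  refine ⟨fun n ↦ (↑) ⁻¹' (A n : Set Y), fun n ↦ (↑) ⁻¹' (B n : Set Y), fun n ↦
    ⟨(A n).isCompact.isClosed.preimage continuous_subtype_val,
      (B n).isCompact.isClosed.preimage continuous_subtype_val, (hAB n).2.2.preimage _⟩,
    fun C hC ↦ ?_⟩
  choose U V hU hV hUV hAU hBV hUVC using fun n ↦ (hC n).exists_ambient_isOpen
  have hAU' n : (A n : Set Y) ⊆ U n := by
    simpa only [Subtype.image_preimage_coe, inter_eq_right.2 (hAB n).1] using hAU n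
  have hBV' n : (B n : Set Y) ⊆ V n := by
    simpa only [Subtype.image_preimage_coe, inter_eq_right.2 (hAB n).2.1] using hBV n
  obtain ⟨x, hxK, hx⟩ := K.isCompact.inter_iInter_nonempty (fun n ↦ (U n ∪ V n)ᶜ)
    (fun n ↦ ((hU n).union (hV n)).isClosed_compl) fun s ↦
      hess s U V (fun n ↦ ⟨hU n, hV n, hUV n⟩) fun n _ ↦ ⟨hAU' n, hBV' n⟩
  exact ⟨⟨x, hxK⟩, mem_iInter.2 fun n ↦ hUVC n (mem_iInter.1 hx n)⟩

theorem setOf_stronglyInfiniteDimensional_eq_image [T5Space Y] :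
    {K : Compacts Y | StronglyInfiniteDimensional (K : Set Y)} =
      Prod.fst '' essentialTriples Y := by
  ext K
  refine ⟨fun h ↦ ?_, ?_⟩
  · obtain ⟨A, B, hK⟩ := h.exists_mem_essentialTriples
    exact ⟨_, hK, rfl⟩
  · rintro ⟨⟨K, A, B⟩, hK, rfl⟩
    exact stronglyInfiniteDimensional_of_mem_essentialTriples hK

end StronglyInfiniteDimensional

section Analytic

open MeasureTheory

variable {Y : Type} [MetricSpace Y] [CompleteSpace Y] [SecondCountableTopology Y]

theorem analyticSet_essentialTriples : AnalyticSet (essentialTriples Y) := by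
  let _ := borel (Compacts Y × (ℕ → Compacts Y) × (ℕ → Compacts Y))
  have : BorelSpace (Compacts Y × (ℕ → Compacts Y) × (ℕ → Compacts Y)) := ⟨rfl⟩
  simp only [essentialTriples, ofPred_and, ofPred_forall]
  refine MeasurableSet.analyticSet (.inter (.iInter fun n ↦ .inter ?_ (.inter ?_ ?_))
    isClosed_setOf_isFinitelyEssential.measurableSet)
  · exact (Compacts.isClosed_setOf_subset.preimage
      (f := fun p : Compacts Y × (ℕ → Compacts Y) × (ℕ → Compacts Y) ↦ (p.2.1 n, p.1))
      (by fun_prop)).measurableSet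
  · exact (Compacts.isClosed_setOf_subset.preimage
      (f := fun p : Compacts Y × (ℕ → Compacts Y) × (ℕ → Compacts Y) ↦ (p.2.2 n, p.1))
      (by fun_prop)).measurableSet
  · exact (Compacts.isOpen_setOfPred_disjoint_coe.preimage
      (f := fun p : Compacts Y × (ℕ → Compacts Y) × (ℕ → Compacts Y) ↦ (p.2.1 n, p.2.2 n))
      (by fun_prop)).measurableSet

theorem analyticSet_setOf_stronglyInfiniteDimensional :
    AnalyticSet {K : Compacts Y | StronglyInfiniteDimensional (K : Set Y)} := by
  rw [setOf_stronglyInfiniteDimensional_eq_image]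
  exact analyticSet_essentialTriples.image_of_continuous continuous_fst

end Analytic

theorem statement13_general (Y : Type) [MetricSpace Y] [CompactSpace Y] :
    MeasureTheory.AnalyticSet
      {K : Hyper Y | StronglyInfiniteDimensional (K : Set Y)} :=
  analyticSet_setOf_stronglyInfiniteDimensional.preimage NonemptyCompacts.continuous_toCompacts

/-- For every compact locally connected metric space `Y`, the family of
all strongly infinite-dimensional compacta contained in `Y` is an analytic subset of
`2^Y`. -/
theorem statement13 (Y : Type) [MetricSpace Y] [CompactSpace Y]
    [LocallyConnectedSpace Y] :
    MeasureTheory.AnalyticSet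
      {K : Hyper Y | StronglyInfiniteDimensional (K : Set Y)} :=
  statement13_general Y
end

section
/- For every compact metric space Y and every integer n ≥ 0, the family C_n(Y) of all compacta in Y of covering dimension ≥ n that are C-spaces is a coanalytic subset of 2^Y, and C_n(Y) ∩ C(Y) is a coanalytic subset of C(Y). -/
open Topology TopologicalSpace Metric Set Filter

/-!
Both defining conditions of `C_n(Y)` are expressed through finite families of open subsets of
the ambient space `Y`. A compactum `K` is a C-space iff for every `ε` it is covered by finitely
many families of pairwise disjoint open sets of `Y` of the prescribed mesh, and `dim K ≤ m` iff
for every `r > 0` it is covered by an open family in `Y` of mesh `< r` and order `≤ m + 1`.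
To pass from covers of `K` to families in `Y`, shrink the cover to closed sets and thicken these
slightly: for compact sets this keeps strict diameter bounds and creates no new intersections.
Covering `K` by a fixed open set is an open condition in the Vietoris topology, so
`{K | dim K ≤ m}` is a `G_δ` in `2^Y` and the non-C-spaces are the projection of a Borel subset
of `2^Y × ℝ^ℕ`; thus `2^Y \ C_n(Y)` is analytic. As `C(Y)` is closed in `2^Y`, it is Polish and
the second claim follows by taking a preimage.
-/

theorem Set.ncard_sep_mem_image_le {α β : Type*} {f : α → Set β} {s : Set α} (hs : s.Finite)
    (x : β) : {V ∈ f '' s | x ∈ V}.ncard ≤ {a ∈ s | x ∈ f a}.ncard := by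
  have : {V ∈ f '' s | x ∈ V} = f '' {a ∈ s | x ∈ f a} := by
    ext V
    simp only [mem_sep_iff, mem_image]
    grind
  rw [this]
  exact ncard_image_le (hs.subset (sep_subset _ _))

theorem forall_ncard_setOf_mem_le_iff {ι α : Type*} [Finite ι] {T : ι → Set α} {N : ℕ} :
    (∀ x, {a | x ∈ T a}.ncard ≤ N) ↔ ∀ s : Set ι, N < s.ncard → ⋂ a ∈ s, T a = ∅ := by
  refine ⟨fun h s hs => eq_empty_iff_forall_notMem.2 fun x hx => ?_, fun h x => ?_⟩
  · have hsub : s ⊆ {a | x ∈ T a} := fun a ha => mem_iInter₂.1 hx a ha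
    exact (hs.trans_le (ncard_le_ncard hsub)).not_ge (h x)
  · by_contra! hlt
    exact (eq_empty_iff_forall_notMem.1 (h _ hlt)) x (mem_iInter₂.2 fun a ha => ha)

theorem MeasureTheory.AnalyticSet.union {α : Type*} [TopologicalSpace α] {s t : Set α}
    (hs : AnalyticSet s) (ht : AnalyticSet t) : AnalyticSet (s ∪ t) := by
  rw [union_eq_iUnion]
  exact AnalyticSet.iUnion (Bool.forall_bool.2 ⟨ht, hs⟩)

theorem TopologicalSpace.NonemptyCompacts.isClosed_setOf_isConnected {X : Type*}
    [TopologicalSpace X] [T2Space X] :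
    IsClosed {K : NonemptyCompacts X | IsConnected (K : Set X)} := by
  refine isOpen_compl_iff.1 (isOpen_iff_forall_mem_open.2 fun K hK => ?_)
  have hK' : ¬ IsPreconnected (K : Set X) := fun h => hK ⟨K.nonempty, h⟩
  rw [isPreconnected_iff_subset_of_fully_disjoint_closed K.isCompact.isClosed] at hK'
  push Not at hK'
  obtain ⟨u, v, hu, hv, hKuv, huv, hKu, hKv⟩ := hK'
  obtain ⟨U, V, hU, hV, huU, hvV, hUV⟩ := SeparatedNhds.of_isCompact_isCompact
    (K.isCompact.inter_right hu) (K.isCompact.inter_right hv)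
    (huv.mono inter_subset_right inter_subset_right)
  have hKU : ((K : Set X) ∩ U).Nonempty := by
    obtain ⟨x, hxK, hxv⟩ := not_subset.1 hKv
    exact ⟨x, hxK, huU ⟨hxK, (hKuv hxK).resolve_right hxv⟩⟩
  have hKV : ((K : Set X) ∩ V).Nonempty := by
    obtain ⟨x, hxK, hxu⟩ := not_subset.1 hKu
    exact ⟨x, hxK, hvV ⟨hxK, (hKuv hxK).resolve_left hxu⟩⟩
  have hKUV : (K : Set X) ⊆ U ∪ V := fun x hx =>
    (hKuv hx).imp (fun hxu => huU ⟨hx, hxu⟩) fun hxv => hvV ⟨hx, hxv⟩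
  refine ⟨{K' | (K' : Set X) ⊆ U ∪ V} ∩ {K' | ((K' : Set X) ∩ U).Nonempty} ∩
    {K' | ((K' : Set X) ∩ V).Nonempty}, ?_, ?_, ⟨⟨hKUV, hKU⟩, hKV⟩⟩
  · rintro K' ⟨⟨hK'UV, hK'U⟩, hK'V⟩ hK'
    obtain ⟨x, -, hxU, hxV⟩ := hK'.isPreconnected U V hU hV hK'UV hK'U hK'V
    exact hUV.le_bot ⟨hxU, hxV⟩
  · exact ((NonemptyCompacts.isOpen_subsets_of_isOpen (hU.union hV)).inter
      (NonemptyCompacts.isOpen_inter_nonempty_of_isOpen hU)).inter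
      (NonemptyCompacts.isOpen_inter_nonempty_of_isOpen hV)

section Thickening

variable {X : Type*} [MetricSpace X]

theorem eventually_diam_thickening_lt {C : Set X} {r : ℝ} (h : diam C < r) :
    ∀ᶠ δ in 𝓝[>] 0, diam (thickening δ C) < r := by
  have hlim : Tendsto (fun δ : ℝ => diam C + 2 * δ) (𝓝 0) (𝓝 (diam C)) := by
    have hcont : Continuous fun δ : ℝ => diam C + 2 * δ := by fun_prop
    simpa using hcont.tendsto 0
  filter_upwards [self_mem_nhdsWithin, nhdsWithin_le_nhds (hlim.eventually (gt_mem_nhds h))]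
    with δ hδ hδr
  exact (diam_thickening_le C (le_of_lt hδ)).trans_lt hδr

theorem eventually_iInter_thickening_eq_empty {ι : Type*} [Nonempty ι] {C : ι → Set X}
    (hC : ∀ a, IsCompact (C a)) (h : ⋂ a, C a = ∅) :
    ∀ᶠ δ in 𝓝[>] 0, ⋂ a, thickening δ (C a) = ∅ := by
  obtain ⟨a₀⟩ := ‹Nonempty ι›
  have hcov : C a₀ ⊆ ⋃ a, (C a)ᶜ := by simp [← compl_iInter, h]
  obtain ⟨δ₀, hδ₀, hleb⟩ :=
    lebesgue_number_lemma_of_metric (hC a₀) (fun a => (hC a).isClosed.isOpen_compl) hcov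
  filter_upwards [Ioo_mem_nhdsGT (half_pos hδ₀)] with δ hδ
  refine eq_empty_iff_forall_notMem.2 fun x hx => ?_
  obtain ⟨y, hy, hxy⟩ := mem_thickening_iff.1 (mem_iInter.1 hx a₀)
  obtain ⟨a, hball⟩ := hleb y hy
  obtain ⟨z, hz, hxz⟩ := mem_thickening_iff.1 (mem_iInter.1 hx a)
  refine hball (mem_ball.2 ?_) hz
  calc dist z y ≤ dist x z + dist x y := dist_triangle_left z y x
    _ < δ₀ := by linarith [hδ.2]

theorem eventually_diam_thickening_lt_and_biInter_thickening_eq_empty {ι : Type*} [Finite ι]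
    {C : ι → Set X} (hC : ∀ a, IsCompact (C a)) {r : ι → ℝ} (hr : ∀ a, diam (C a) < r a) :
    ∀ᶠ δ in 𝓝[>] 0, (∀ a, diam (thickening δ (C a)) < r a) ∧
      ∀ s : Set ι, s.Nonempty → ⋂ a ∈ s, C a = ∅ → ⋂ a ∈ s, thickening δ (C a) = ∅ := by
  refine (eventually_all.2 fun a => eventually_diam_thickening_lt (hr a)).and
    (eventually_all.2 fun s => ?_)
  by_cases hs : s.Nonempty ∧ ⋂ a ∈ s, C a = ∅
  · have := hs.1.to_subtype
    rw [biInter_eq_iInter] at hs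
    filter_upwards [eventually_iInter_thickening_eq_empty (fun a : s => hC a) hs.2] with δ hδ
    simpa only [biInter_eq_iInter] using fun _ _ => hδ
  · exact Eventually.of_forall fun δ hne hemp => absurd ⟨hne, hemp⟩ hs

theorem IsCompact.exists_isOpen_extension {K : Set X} (hK : IsCompact K) {ι : Type*} [Finite ι]
    {u : ι → Set K} (hu : ∀ a, IsOpen (u a)) (hcov : ⋃ a, u a = univ) {r : ι → ℝ}
    (hr : ∀ a, diam (u a) < r a) :
    ∃ T : ι → Set X, (∀ a, IsOpen (T a)) ∧ (∀ a, diam (T a) < r a) ∧ K ⊆ ⋃ a, T a ∧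
      ∀ s : Set ι, s.Nonempty → ⋂ a ∈ s, u a = ∅ → ⋂ a ∈ s, T a = ∅ := by
  have := isCompact_iff_compactSpace.mp hK
  obtain ⟨w, hwcov, -, hwu⟩ := exists_subset_iUnion_closure_subset isClosed_univ hu
    (fun _ _ => toFinite _) hcov.ge
  let C : ι → Set X := fun a => (↑) '' closure (w a)
  have hCcpt : ∀ a, IsCompact (C a) := fun a =>
    isClosed_closure.isCompact.image continuous_subtype_val
  have hCdiam : ∀ a, diam (C a) < r a := fun a => by
    rw [isometry_subtype_coe.diam_image]
    exact (diam_mono (hwu a) isBounded_of_compactSpace).trans_lt (hr a)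
  have hCinter : ∀ s : Set ι, s.Nonempty → ⋂ a ∈ s, u a = ∅ → ⋂ a ∈ s, C a = ∅ := by
    refine fun s ⟨a₀, ha₀⟩ hs => eq_empty_iff_forall_notMem.2 fun x hx => ?_
    obtain ⟨y, -, rfl⟩ := mem_iInter₂.1 hx a₀ ha₀
    refine (eq_empty_iff_forall_notMem.1 hs) y (mem_iInter₂.2 fun a ha => ?_)
    obtain ⟨y', hy', hyy'⟩ := mem_iInter₂.1 hx a ha
    exact hwu a (Subtype.ext hyy' ▸ hy')
  obtain ⟨δ, ⟨hdiam, hempty⟩, hδ⟩ :=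
    ((eventually_diam_thickening_lt_and_biInter_thickening_eq_empty hCcpt hCdiam).and
      self_mem_nhdsWithin).exists
  refine ⟨fun a => thickening δ (C a), fun a => isOpen_thickening, hdiam, fun x hx => ?_,
    fun s hs hu => hempty s hs (hCinter s hs hu)⟩
  obtain ⟨a, ha⟩ := mem_iUnion.1 (hwcov (mem_univ ⟨x, hx⟩))
  exact mem_iUnion.2 ⟨a, self_subset_thickening hδ _ ⟨_, subset_closure ha, rfl⟩⟩

end Thickening

section CoveringDimension

variable {X : Type} [MetricSpace X]

def HasOpenCoverMeshOrder (K : Set X) (r : ℝ) (N : ℕ) : Prop :=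
  ∃ 𝒪 : Set (Set X), 𝒪.Finite ∧ (∀ O ∈ 𝒪, IsOpen O ∧ diam O < r) ∧ K ⊆ ⋃₀ 𝒪 ∧
    ∀ x, {O ∈ 𝒪 | x ∈ O}.ncard ≤ N

theorem isOpen_setOf_hasOpenCoverMeshOrder (r : ℝ) (N : ℕ) :
    IsOpen {K : NonemptyCompacts X | HasOpenCoverMeshOrder (K : Set X) r N} := by
  refine isOpen_iff_forall_mem_open.2 fun K ⟨𝒪, hfin, hO, hK, hord⟩ => ?_
  refine ⟨{K' | (K' : Set X) ⊆ ⋃₀ 𝒪}, fun K' hK' => ⟨𝒪, hfin, hO, hK', hord⟩, ?_, hK⟩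
  exact NonemptyCompacts.isOpen_subsets_of_isOpen (isOpen_sUnion fun O h => (hO O h).1)

theorem IsCompact.hasOpenCoverMeshOrder_of_covDimLE {K : Set X} (hK : IsCompact K) {m : ℕ}
    (h : CovDimLE K m) {r : ℝ} (hr : 0 < r) : HasOpenCoverMeshOrder K r (m + 1) := by
  have := isCompact_iff_compactSpace.mp hK
  obtain ⟨t, -, htfin, hball⟩ := finite_cover_balls_of_compact (isCompact_univ (X := K))
    (div_pos hr four_pos)
  obtain ⟨𝒱, hVopen, hVcov, hVref, hVord⟩ := h (htfin.toFinset.image (ball · (r / 4)))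
    (by simp only [Finset.forall_mem_image]; exact fun _ _ => isOpen_ball)
    (by simpa [sUnion_image, eq_univ_iff_forall] using hball)
  have hVdiam : ∀ V ∈ 𝒱, diam V < r := fun V hV => by
    obtain ⟨_, hU, hVU⟩ := hVref V hV
    obtain ⟨x, -, rfl⟩ := Finset.mem_image.1 hU
    calc diam V ≤ diam (ball x (r / 4)) := diam_mono hVU isBounded_of_compactSpace
      _ ≤ 2 * (r / 4) := diam_ball (by positivity)
      _ < r := by linarith
  obtain ⟨T, hTopen, hTdiam, hKT, hTinter⟩ := hK.exists_isOpen_extension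
    (u := fun V : 𝒱 => (V : Set K)) (fun V => hVopen V V.2)
    (by rw [← hVcov, sUnion_eq_iUnion]; rfl) (fun V => hVdiam V V.2)
  have hVord' : ∀ z, {V : 𝒱 | z ∈ (V : Set K)}.ncard ≤ m + 1 := fun z => by
    refine le_trans (le_of_eq ?_) (hVord z)
    rw [← ncard_image_of_injective _ Subtype.val_injective]
    congr 1
    ext V
    simp [and_comm]
  -- Order `≤ m + 1` means that any `m + 2` members have empty intersection, which `T` inherits.
  have hTord : ∀ x, {V : 𝒱 | x ∈ T V}.ncard ≤ m + 1 :=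
    forall_ncard_setOf_mem_le_iff.2 fun s hs => hTinter s
      (nonempty_of_ncard_ne_zero (by omega)) (forall_ncard_setOf_mem_le_iff.1 hVord' s hs)
  refine ⟨range T, finite_range T, ?_, by simpa [sUnion_range] using hKT, fun x => ?_⟩
  · rintro _ ⟨V, rfl⟩
    exact ⟨hTopen V, hTdiam V⟩
  · rw [← image_univ]
    exact (ncard_sep_mem_image_le finite_univ x).trans (by simpa using hTord x)

end CoveringDimension

section CSpace

variable {X : Type} [MetricSpace X]

def HasCSpaceCover (K : Set X) (ε : ℕ → ℝ) (k : ℕ) : Prop :=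
  ∃ V : Fin k → Set (Set X),
    (∀ i : Fin k, (V i).Finite ∧ (∀ v ∈ V i, IsOpen v ∧ diam v < ε i) ∧ (V i).Pairwise Disjoint) ∧
    K ⊆ ⋃ i, ⋃₀ V i

theorem isOpen_setOf_hasCSpaceCover (k : ℕ) :
    IsOpen {p : NonemptyCompacts X × (ℕ → ℝ) | HasCSpaceCover (p.1 : Set X) p.2 k} := by
  refine isOpen_iff_forall_mem_open.2 fun p ⟨V, hV, hK⟩ => ?_
  have hdiam :
      IsOpen {q : NonemptyCompacts X × (ℕ → ℝ) | ∀ i : Fin k, ∀ v ∈ V i, diam v < q.2 i} := by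
    simp only [ofPred_forall]
    exact isOpen_iInter_of_finite fun i => (hV i).1.isOpen_biInter fun v _ =>
      isOpen_lt continuous_const (by fun_prop)
  have hcov : IsOpen {q : NonemptyCompacts X × (ℕ → ℝ) | (q.1 : Set X) ⊆ ⋃ i, ⋃₀ V i} :=
    (NonemptyCompacts.isOpen_subsets_of_isOpen (isOpen_iUnion fun i =>
      isOpen_sUnion fun v hv => ((hV i).2.1 v hv).1)).preimage continuous_fst
  refine ⟨_, ?_, hcov.inter hdiam, hK, fun i v hv => ((hV i).2.1 v hv).2⟩
  rintro q ⟨hq, hqdiam⟩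
  exact ⟨V, fun i => ⟨(hV i).1, fun v hv => ⟨((hV i).2.1 v hv).1, hqdiam i v hv⟩, (hV i).2.2⟩, hq⟩

theorem IsCompact.exists_hasCSpaceCover {K : Set X} (hK : IsCompact K) (h : IsCSpace K)
    {ε : ℕ → ℝ} (hε : ∀ i, 0 < ε i) : ∃ k, HasCSpaceCover K ε k := by
  obtain ⟨k, V, hV, hcov⟩ := h ε hε
  have := fun i => (hV i).1.to_subtype
  obtain ⟨T, hTopen, hTdiam, hKT, hTinter⟩ := hK.exists_isOpen_extension
    (u := fun a : (i : Fin k) × V i => (a.2 : Set K)) (fun a => ((hV a.1).2.1 a.2 a.2.2).1)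
    (by simp [← hcov, iUnion_sigma, sUnion_eq_biUnion])
    (r := fun a => ε a.1) (fun a => ((hV a.1).2.1 a.2 a.2.2).2)
  refine ⟨k, fun i => T '' {a | a.1 = i}, fun i => ⟨toFinite _, ?_, ?_⟩, ?_⟩
  · rintro _ ⟨a, rfl, rfl⟩
    exact ⟨hTopen a, hTdiam a⟩
  · rintro _ ⟨⟨j, v⟩, rfl : j = i, rfl⟩ _ ⟨⟨j', v'⟩, rfl : j' = j, rfl⟩ hne
    have hvv' : (v : Set K) ≠ v' := fun h => hne (by rw [Subtype.ext h])
    rw [disjoint_iff_inter_eq_empty, ← biInter_pair]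
    refine hTinter _ (insert_nonempty _ _) ?_
    rw [biInter_pair, ← disjoint_iff_inter_eq_empty]
    exact (hV _).2.2 v.2 v'.2 hvv'
  · refine hKT.trans (iUnion_subset fun a => ?_)
    exact subset_iUnion_of_subset a.1 (subset_sUnion_of_mem ⟨a, rfl, rfl⟩)

end CSpace

section CompactAmbient

open MeasureTheory

variable {X : Type} [MetricSpace X] [CompactSpace X]

theorem diam_preimage_subtype_val_le (K O : Set X) : diam ((↑) ⁻¹' O : Set K) ≤ diam O := by
  rw [← isometry_subtype_coe.diam_image]
  exact diam_mono (image_preimage_subset _ _) isBounded_of_compactSpace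

theorem IsCompact.covDimLE_of_hasOpenCoverMeshOrder {K : Set X} (hK : IsCompact K)
    (hne : K.Nonempty) {m : ℕ} (h : ∀ j : ℕ, HasOpenCoverMeshOrder K (1 / (j + 1)) (m + 1)) :
    CovDimLE K m := by
  have := isCompact_iff_compactSpace.mp hK
  intro 𝒰 hUopen hUcov
  obtain ⟨δ, hδ, hleb⟩ := lebesgue_number_lemma_of_metric_sUnion (isCompact_univ (X := K))
    hUopen hUcov.ge
  obtain ⟨j, hj⟩ := exists_nat_one_div_lt hδ
  obtain ⟨𝒪, hfin, hO, hKO, hord⟩ := h j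
  refine ⟨(hfin.image ((↑) ⁻¹' · : Set X → Set K)).toFinset, ?_, ?_, ?_, ?_⟩
  · simp only [Finite.mem_toFinset, forall_mem_image]
    exact fun O hO' => (hO O hO').1.preimage continuous_subtype_val
  · refine eq_univ_of_forall fun x => ?_
    obtain ⟨O, hO', hx⟩ := hKO x.2
    exact ⟨_, by simpa using ⟨O, hO', rfl⟩, hx⟩
  · simp only [Finite.mem_toFinset, forall_mem_image]
    intro O hO'
    rcases eq_empty_or_nonempty ((↑) ⁻¹' O : Set K) with hempty | ⟨x, hx⟩
    · obtain ⟨U, hU, -⟩ := hUcov.ge (mem_univ ⟨_, hne.some_mem⟩)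
      exact ⟨U, hU, hempty ▸ empty_subset U⟩
    · obtain ⟨U, hU, hball⟩ := hleb x trivial
      refine ⟨U, hU, fun y hy => hball (mem_ball.2 ?_)⟩
      calc dist y x ≤ diam ((↑) ⁻¹' O : Set K) :=
            dist_le_diam_of_mem isBounded_of_compactSpace hy hx
        _ ≤ diam O := diam_preimage_subtype_val_le K O
        _ < δ := (hO O hO').2.trans hj
  · intro z
    simpa using (ncard_sep_mem_image_le hfin z).trans (hord z)

theorem analyticSet_setOf_covDimLE (m : ℕ) :
    AnalyticSet {K : NonemptyCompacts X | CovDimLE (K : Set X) m} := by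
  borelize (NonemptyCompacts X)
  have : {K : NonemptyCompacts X | CovDimLE (K : Set X) m} =
      ⋂ j : ℕ, {K : NonemptyCompacts X |
        HasOpenCoverMeshOrder (K : Set X) (1 / (j + 1)) (m + 1)} := by
    ext K
    simp only [mem_ofPred_eq, mem_iInter]
    exact ⟨fun h j => K.isCompact.hasOpenCoverMeshOrder_of_covDimLE h Nat.one_div_pos_of_nat,
      K.isCompact.covDimLE_of_hasOpenCoverMeshOrder K.nonempty⟩
  rw [this]
  exact (MeasurableSet.iInter fun j =>
    (isOpen_setOf_hasOpenCoverMeshOrder _ _).measurableSet).analyticSet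

theorem isCSpace_of_forall_exists_hasCSpaceCover {K : Set X}
    (h : ∀ ε : ℕ → ℝ, (∀ i, 0 < ε i) → ∃ k, HasCSpaceCover K ε k) : IsCSpace K := by
  intro ε hε
  obtain ⟨k, V, hV, hKV⟩ := h ε hε
  refine ⟨k, fun i => ((↑) ⁻¹' · : Set X → Set K) '' V i, fun i => ⟨(hV i).1.image _, ?_, ?_⟩, ?_⟩
  · rintro _ ⟨v, hv, rfl⟩
    exact ⟨((hV i).2.1 v hv).1.preimage continuous_subtype_val,
      (diam_preimage_subtype_val_le K v).trans_lt ((hV i).2.1 v hv).2⟩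
  · rintro _ ⟨v, hv, rfl⟩ _ ⟨v', hv', rfl⟩ hne
    exact ((hV i).2.2 hv hv' fun h => hne (h ▸ rfl)).preimage _
  · refine eq_univ_of_forall fun x => ?_
    obtain ⟨i, v, hv, hx⟩ := by simpa using hKV x.2
    exact mem_iUnion.2 ⟨i, _, ⟨v, hv, rfl⟩, hx⟩

theorem analyticSet_setOf_not_isCSpace :
    AnalyticSet {K : NonemptyCompacts X | ¬ IsCSpace (K : Set X)} := by
  borelize (NonemptyCompacts X × (ℕ → ℝ))
  have hB : MeasurableSet {p : NonemptyCompacts X × (ℕ → ℝ) |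
      (∀ i, 0 < p.2 i) ∧ ∀ k, ¬ HasCSpaceCover (p.1 : Set X) p.2 k} := by
    simp only [ofPred_and, ofPred_forall]
    exact (MeasurableSet.iInter fun i =>
      (isOpen_lt continuous_const (by fun_prop)).measurableSet).inter
      (MeasurableSet.iInter fun k => (isOpen_setOf_hasCSpaceCover k).isClosed_compl.measurableSet)
  convert hB.analyticSet.image_of_continuous continuous_fst
  ext K
  constructor
  · intro hK
    by_contra hK'
    refine hK (isCSpace_of_forall_exists_hasCSpaceCover fun ε hε => ?_)
    by_contra! hk
    exact hK' ⟨(K, ε), ⟨hε, hk⟩, rfl⟩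
  · rintro ⟨⟨K, ε⟩, ⟨hε, hk⟩, rfl⟩ hK
    obtain ⟨k, hk'⟩ := K.isCompact.exists_hasCSpaceCover hK hε
    exact hk k hk'

theorem analyticSet_compl_cFam (n : ℕ) : AnalyticSet (CFam X n)ᶜ := by
  have : (CFam X n)ᶜ = {K : Hyper X | ¬ IsCSpace (K : Set X)} ∪
      ⋃ m : Fin n, {K | CovDimLE (K : Set X) m} := by
    ext K
    simp [CFam, CovDimGE, imp_iff_not_or, Fin.exists_iff]
  rw [this]
  exact analyticSet_setOf_not_isCSpace.union (.iUnion fun m => analyticSet_setOf_covDimLE m)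

end CompactAmbient

/-- For every compact metric space `Y` and every `n ≥ 0`, the family
`C_n(Y)` of all compacta in `Y` of covering dimension `≥ n` that are `C`-spaces is a
coanalytic subset of `2^Y`, and `C_n(Y) ∩ C(Y)` is a coanalytic subset of `C(Y)`. -/
theorem statement15 (Y : Type) [MetricSpace Y] [CompactSpace Y] (n : ℕ) :
    IsCoanalytic (CFam Y n) ∧
    IsCoanalytic {K : Subcontinua Y | K.1 ∈ CFam Y n} := by
  have : PolishSpace (Subcontinua Y) := NonemptyCompacts.isClosed_setOf_isConnected.polishSpace
  exact ⟨analyticSet_compl_cFam n, (analyticSet_compl_cFam n).preimage continuous_subtype_val⟩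
end

section
/- For every compact metric space Y, the family HID(Y) of all hereditarily infinite-dimensional compacta contained in Y is a coanalytic subset of the hyperspace 2^Y. -/
open Topology TopologicalSpace Metric Set Filter

/-! The complement of `HID(Y)` in `2^Y` is the union of the sets `{K | dim K ≤ m}` and of the
projection to the first factor of `{(K, L) | L ⊆ K, L finite- but not zero-dimensional}`, a
Borel subset of the Polish space `2^Y × 2^Y` once each `{K | dim K ≤ m}` is Borel; so it is
analytic.

That these sets are Borel comes from testing dimension on countably many covers. Let `𝓑` be
the (countable) family of finite unions of basic open sets, so that a member of `𝓑` fits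
between any compact set and any open set containing it. Then for a compactum `K`, `dim K ≤ m`
iff every finite cover of `K` by members of `𝓑` is refined by a finite family of members of
`𝓑` covering `K` in which no point of `K` lies in more than `m + 1` members. For fixed finite
families, "covering `K`" is an open condition on `K` and "order `≤ m + 1` on `K`" a closed one,
since the points lying in more than `m + 1` members of a finite open family form an open set. -/

theorem Set.ncard_le_ncard_of_subset_image {α β : Type*} {s : Set β} {t : Set α} {f : α → β}
    (ht : t.Finite) (h : s ⊆ f '' t) : s.ncard ≤ t.ncard :=
  (ncard_le_ncard h (ht.image f)).trans (ncard_image_le ht)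

section CoveringDimension

variable {Z W : Type} [TopologicalSpace Z] [TopologicalSpace W]

theorem CovDimLE.of_homeomorph (e : Z ≃ₜ W) {n : ℕ} (h : CovDimLE Z n) : CovDimLE W n := by
  intro 𝒰 hopen hcover
  obtain ⟨𝒱, hV_open, hV_cover, hV_refine, hV_order⟩ := h (𝒰.image (e ⁻¹' ·))
    (by simpa using fun U hU => (hopen U hU).preimage e.continuous)
    (by rw [Finset.coe_image, sUnion_image, ← preimage_iUnion₂, ← sUnion_eq_biUnion, hcover,
      preimage_univ])
  refine ⟨𝒱.image (e.symm ⁻¹' ·), ?_, ?_, ?_, fun w => ?_⟩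
  · simpa using fun V hV => (hV_open V hV).preimage e.symm.continuous
  · rw [Finset.coe_image, sUnion_image, ← preimage_iUnion₂, ← sUnion_eq_biUnion, hV_cover,
      preimage_univ]
  · simp only [Finset.mem_image, forall_exists_index, and_imp, forall_apply_eq_imp_iff₂]
    intro V hV
    obtain ⟨U', hU', hVU'⟩ := hV_refine V hV
    obtain ⟨U, hU, rfl⟩ := Finset.mem_image.1 hU'
    exact ⟨U, hU, fun w hw => by simpa using hVU' hw⟩
  · refine (Set.ncard_le_ncard_of_subset_image (f := (e.symm ⁻¹' ·))
      (𝒱.finite_toSet.subset (sep_subset _ _)) ?_).trans (hV_order (e.symm w))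
    rintro _ ⟨hV', hwV⟩
    obtain ⟨V, hV, rfl⟩ := Finset.mem_image.1 hV'
    exact ⟨V, ⟨hV, hwV⟩, rfl⟩

theorem Homeomorph.covDimLE_iff (e : Z ≃ₜ W) {n : ℕ} : CovDimLE Z n ↔ CovDimLE W n :=
  ⟨.of_homeomorph e, .of_homeomorph e.symm⟩

end CoveringDimension

theorem covDimLE_image_val_iff {X : Type} [TopologicalSpace X] {K : Set X} (F : Set K) {n : ℕ} :
    CovDimLE (Subtype.val '' F : Set X) n ↔ CovDimLE F n := by
  have hrange : range (Subtype.val ∘ Subtype.val : F → X) = Subtype.val '' F := by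
    rw [range_comp, Subtype.range_coe]
  exact ((IsEmbedding.subtypeVal.comp IsEmbedding.subtypeVal).toHomeomorph.trans
    (Homeomorph.setCongr hrange)).covDimLE_iff.symm

section Refinements

variable {X : Type*} [TopologicalSpace X]

theorem isOpen_setOf_lt_ncard_mem {𝒢 : Set (Set X)} (h𝒢 : 𝒢.Finite)
    (hopen : ∀ G ∈ 𝒢, IsOpen G) (n : ℕ) : IsOpen {x | n < {G ∈ 𝒢 | x ∈ G}.ncard} := by
  refine isOpen_iff_forall_mem_open.2 fun x hx => ⟨⋂₀ {G ∈ 𝒢 | x ∈ G}, fun y hy => ?_,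
    (h𝒢.subset (sep_subset _ _)).isOpen_sInter fun G hG => hopen G hG.1,
    mem_sInter.2 fun G hG => hG.2⟩
  have hmono : {G ∈ 𝒢 | x ∈ G} ⊆ {G ∈ 𝒢 | y ∈ G} := fun G hG => ⟨hG.1, hy G hG⟩
  exact hx.trans_le (ncard_le_ncard hmono (h𝒢.subset (sep_subset _ _)))

def InterpolatesCompactOpen (𝓑 : Set (Set X)) : Prop :=
  (∀ B ∈ 𝓑, IsOpen B) ∧
    ∀ C O : Set X, IsCompact C → IsOpen O → C ⊆ O → ∃ B ∈ 𝓑, C ⊆ B ∧ B ⊆ O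

theorem exists_countable_interpolatesCompactOpen [SecondCountableTopology X] :
    ∃ 𝓑 : Set (Set X), 𝓑.Countable ∧ InterpolatesCompactOpen 𝓑 := by
  have hb := isBasis_countableBasis X
  refine ⟨sUnion '' {t | t.Finite ∧ t ⊆ countableBasis X},
    (countable_ofPred_finite_subset (countable_countableBasis X)).image _, ?_, ?_⟩
  · rintro _ ⟨t, ⟨-, htb⟩, rfl⟩
    exact isOpen_sUnion fun B hB => hb.isOpen (htb hB)
  · intro C O hC hO hCO
    obtain ⟨t, htb, htfin, hCt⟩ := hC.elim_finite_subcover_image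
      (b := {B ∈ countableBasis X | B ⊆ O}) (c := id) (fun B hB => hb.isOpen hB.1)
      fun x hx => by
        obtain ⟨B, hB, hxB, hBO⟩ := hb.exists_subset_of_mem_open (hCO hx) hO
        exact mem_biUnion ⟨hB, hBO⟩ hxB
    refine ⟨⋃₀ t, ⟨t, ⟨htfin, fun B hB => (htb hB).1⟩, rfl⟩, by rwa [sUnion_eq_biUnion], ?_⟩
    exact sUnion_subset fun B hB => (htb hB).2

def IsRefinementOfOrderLE (K : Set X) (m : ℕ) (𝒰 𝒢 : Set (Set X)) : Prop :=
  K ⊆ ⋃₀ 𝒢 ∧ (∀ G ∈ 𝒢, ∃ U ∈ 𝒰, G ⊆ U) ∧ ∀ z ∈ K, {G ∈ 𝒢 | z ∈ G}.ncard ≤ m + 1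

end Refinements

section CovDimLECharacterization

variable {X : Type} [TopologicalSpace X] {𝓑 : Set (Set X)} {K : Set X} {m : ℕ}

theorem covDimLE_of_forall_exists_refinement (h𝓑 : InterpolatesCompactOpen 𝓑)
    (hK : IsCompact K)
    (h : ∀ 𝒰 ⊆ 𝓑, 𝒰.Finite → K ⊆ ⋃₀ 𝒰 → ∃ 𝒢 ⊆ 𝓑, 𝒢.Finite ∧ IsRefinementOfOrderLE K m 𝒰 𝒢) :
    CovDimLE K m := by
  intro 𝒰 hopen hcover
  set 𝒰' := {B ∈ 𝓑 | ∃ U ∈ 𝒰, Subtype.val ⁻¹' B ⊆ U}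
  have hK𝒰' : K ⊆ ⋃ B ∈ 𝒰', id B := by
    intro x hx
    obtain ⟨U, hU, hxU⟩ := mem_sUnion.1 (hcover.symm ▸ mem_univ (⟨x, hx⟩ : K))
    obtain ⟨W, hW, rfl⟩ := isOpen_induced_iff.1 (hopen U hU)
    obtain ⟨B, hB, hxB, hBW⟩ := h𝓑.2 {x} W isCompact_singleton hW (singleton_subset_iff.2 hxU)
    exact mem_biUnion ⟨hB, _, hU, preimage_mono hBW⟩ (singleton_subset_iff.1 hxB)
  obtain ⟨𝒰₀, h𝒰₀, h𝒰₀_fin, hK𝒰₀⟩ :=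
    hK.elim_finite_subcover_image (fun B hB => h𝓑.1 B hB.1) hK𝒰'
  obtain ⟨𝒢, h𝒢𝓑, h𝒢_fin, hcov, hrefine, horder⟩ := h 𝒰₀ (h𝒰₀.trans (sep_subset _ _))
    h𝒰₀_fin (by rwa [sUnion_eq_biUnion])
  refine ⟨h𝒢_fin.toFinset.image (Subtype.val ⁻¹' ·), ?_, ?_, ?_, fun x => ?_⟩
  · simpa using fun G hG => (h𝓑.1 G (h𝒢𝓑 hG)).preimage continuous_subtype_val
  · refine eq_univ_of_forall fun x => ?_
    obtain ⟨G, hG, hxG⟩ := hcov x.2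
    exact ⟨Subtype.val ⁻¹' G, by simpa using ⟨G, hG, rfl⟩, hxG⟩
  · simp only [Finset.mem_image, Finite.mem_toFinset, forall_exists_index, and_imp,
      forall_apply_eq_imp_iff₂]
    intro G hG
    obtain ⟨U₀, hU₀, hGU₀⟩ := hrefine G hG
    obtain ⟨-, U, hU, hU₀U⟩ := h𝒰₀ hU₀
    exact ⟨U, hU, (preimage_mono hGU₀).trans hU₀U⟩
  · refine (Set.ncard_le_ncard_of_subset_image (f := (Subtype.val ⁻¹' ·))
      (h𝒢_fin.subset (sep_subset _ _)) ?_).trans (horder x x.2)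
    rintro _ ⟨hV, hxV⟩
    obtain ⟨G, hG, rfl⟩ : ∃ G ∈ 𝒢, Subtype.val ⁻¹' G = _ := by simpa using hV
    exact ⟨G, ⟨hG, hxV⟩, rfl⟩

theorem CovDimLE.exists_refinement [T2Space X] (h𝓑 : InterpolatesCompactOpen 𝓑)
    (hK : IsCompact K) (hdim : CovDimLE K m) {𝒰 : Set (Set X)} (h𝒰 : 𝒰.Finite)
    (hopen : ∀ U ∈ 𝒰, IsOpen U) (hcover : K ⊆ ⋃₀ 𝒰) :
    ∃ 𝒢 ⊆ 𝓑, 𝒢.Finite ∧ IsRefinementOfOrderLE K m 𝒰 𝒢 := by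
  have : CompactSpace K := isCompact_iff_compactSpace.1 hK
  obtain ⟨𝒱, hV_open, hV_cover, hV_refine, hV_order⟩ :=
    hdim (h𝒰.toFinset.image (Subtype.val ⁻¹' ·))
    (by simpa using fun U hU => (hopen U hU).preimage continuous_subtype_val)
    (by
      refine eq_univ_of_forall fun x => ?_
      obtain ⟨U, hU, hxU⟩ := hcover x.2
      exact ⟨Subtype.val ⁻¹' U, by simpa using ⟨U, hU, rfl⟩, hxU⟩)
  -- Shrink `𝒱` to a closed cover `C` of `K`; each `C V` is then compact in `X`, so a member of
  -- `𝓑` fits between it and an open set of `X` cutting `V` out of `K`.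
  obtain ⟨C, hC_cover, hC_closed, hCV⟩ := exists_iUnion_eq_closed_subset
    (u := fun V : (𝒱 : Set (Set K)) => (V : Set K)) (fun V => hV_open V V.2)
    (fun _ => toFinite _) (by rw [← sUnion_eq_iUnion, hV_cover])
  have hO : ∀ V : (𝒱 : Set (Set K)), ∃ O : Set X, IsOpen O ∧ Subtype.val '' C V ⊆ O ∧
      Subtype.val ⁻¹' O ⊆ (V : Set K) ∧ ∃ U ∈ 𝒰, O ⊆ U := by
    intro V
    obtain ⟨U', hU', hVU'⟩ := hV_refine V V.2
    obtain ⟨U, hU, rfl⟩ : ∃ U ∈ 𝒰, Subtype.val ⁻¹' U = U' := by simpa using hU'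
    obtain ⟨W, hW, hWV⟩ := isOpen_induced_iff.1 (hV_open V V.2)
    refine ⟨W ∩ U, hW.inter (hopen U hU), ?_, ?_, U, hU, inter_subset_right⟩
    · rintro _ ⟨x, hx, rfl⟩
      exact ⟨show x ∈ Subtype.val ⁻¹' W from hWV ▸ hCV V hx, hVU' (hCV V hx)⟩
    · rw [preimage_inter, hWV]
      exact inter_subset_left
  choose O hO_open hCO hOV hOU using hO
  choose G hG𝓑 hCG hGO using fun V => h𝓑.2 _ _
    ((hC_closed V).isCompact.image continuous_subtype_val) (hO_open V) (hCO V)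
  refine ⟨range G, range_subset_iff.2 hG𝓑, finite_range G, fun x hx => ?_, ?_, fun z hz => ?_⟩
  · obtain ⟨V, hxV⟩ := mem_iUnion.1 (hC_cover.symm ▸ mem_univ (⟨x, hx⟩ : K))
    exact ⟨G V, mem_range_self V, hCG V (mem_image_of_mem _ hxV)⟩
  · rintro _ ⟨V, rfl⟩
    obtain ⟨U, hU, hOU⟩ := hOU V
    exact ⟨U, hU, (hGO V).trans hOU⟩
  · have hsub : {G' ∈ range G | z ∈ G'} ⊆ G '' {V | (⟨z, hz⟩ : K) ∈ (V : Set K)} := by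
      rintro _ ⟨⟨V, rfl⟩, hzG⟩
      exact ⟨V, hOV V (hGO V hzG), rfl⟩
    have himage : Subtype.val '' {V : (𝒱 : Set (Set K)) | (⟨z, hz⟩ : K) ∈ (V : Set K)} =
        {V ∈ (𝒱 : Set (Set K)) | ⟨z, hz⟩ ∈ V} := by
      ext V
      simp [and_comm]
    calc _ ≤ _ := Set.ncard_le_ncard_of_subset_image (toFinite _) hsub
      _ = _ := (ncard_image_of_injective _ Subtype.val_injective).symm
      _ ≤ m + 1 := himage ▸ hV_order _

theorem covDimLE_iff_forall_exists_refinement [T2Space X] (h𝓑 : InterpolatesCompactOpen 𝓑)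
    (hK : IsCompact K) :
    CovDimLE K m ↔
      ∀ 𝒰 ⊆ 𝓑, 𝒰.Finite → K ⊆ ⋃₀ 𝒰 → ∃ 𝒢 ⊆ 𝓑, 𝒢.Finite ∧ IsRefinementOfOrderLE K m 𝒰 𝒢 :=
  ⟨fun hdim _ h𝒰𝓑 h𝒰 hcover =>
    hdim.exists_refinement h𝓑 hK h𝒰 (fun U hU => h𝓑.1 U (h𝒰𝓑 hU)) hcover,
    covDimLE_of_forall_exists_refinement h𝓑 hK⟩

end CovDimLECharacterization

namespace TopologicalSpace.NonemptyCompacts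

theorem isClosed_setOf_subset {X : Type*} [TopologicalSpace X] [T2Space X] :
    IsClosed {p : NonemptyCompacts X × NonemptyCompacts X | (p.2 : Set X) ⊆ p.1} := by
  refine isOpen_compl_iff.1 (isOpen_iff_forall_mem_open.2 ?_)
  rintro ⟨K, L⟩ hKL
  obtain ⟨x, hxL, hxK⟩ := not_subset.1 hKL
  obtain ⟨V, U, hV, hU, hKV, hxU, hUV⟩ := SeparatedNhds.of_isCompact_isCompact K.isCompact
    isCompact_singleton (disjoint_singleton_right.2 hxK)
  refine ⟨{K' : NonemptyCompacts X | (K' : Set X) ⊆ V} ×ˢ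
    {L' : NonemptyCompacts X | ((L' : Set X) ∩ U).Nonempty}, ?_,
    (isOpen_subsets_of_isOpen hV).prod (isOpen_inter_nonempty_of_isOpen hU),
    ⟨hKV, x, hxL, hxU rfl⟩⟩
  rintro ⟨K', L'⟩ ⟨hK'V, y, hyL', hyU⟩ hL'K'
  exact hUV.ne_of_mem (hK'V (hL'K' hyL')) hyU rfl

variable {X : Type} [TopologicalSpace X] [MeasurableSpace (NonemptyCompacts X)]
  [BorelSpace (NonemptyCompacts X)]

theorem measurableSet_setOf_isRefinementOfOrderLE {𝒢 : Set (Set X)} (h𝒢 : 𝒢.Finite)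
    (hopen : ∀ G ∈ 𝒢, IsOpen G) (m : ℕ) (𝒰 : Set (Set X)) :
    MeasurableSet {K : NonemptyCompacts X | IsRefinementOfOrderLE (K : Set X) m 𝒰 𝒢} := by
  have hsplit : {K : NonemptyCompacts X | IsRefinementOfOrderLE (K : Set X) m 𝒰 𝒢} =
      {K : NonemptyCompacts X | (K : Set X) ⊆ ⋃₀ 𝒢} ∩ {_K | ∀ G ∈ 𝒢, ∃ U ∈ 𝒰, G ⊆ U} ∩
        {K : NonemptyCompacts X | (K : Set X) ⊆ {z | m + 1 < {G ∈ 𝒢 | z ∈ G}.ncard}ᶜ} := by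
    ext K
    simp [IsRefinementOfOrderLE, subset_def, and_assoc]
  rw [hsplit]
  exact ((isOpen_subsets_of_isOpen (isOpen_sUnion hopen)).measurableSet.inter (.const _)).inter
    (isClosed_subsets_of_isClosed (isOpen_setOf_lt_ncard_mem h𝒢 hopen _).isClosed_compl
      |>.measurableSet)

theorem measurableSet_setOf_covDimLE [T2Space X] [SecondCountableTopology X] (m : ℕ) :
    MeasurableSet {K : NonemptyCompacts X | CovDimLE (K : Set X) m} := by
  obtain ⟨𝓑, h𝓑_count, h𝓑⟩ := exists_countable_interpolatesCompactOpen (X := X)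
  set 𝔉 := {𝒰 : Set (Set X) | 𝒰.Finite ∧ 𝒰 ⊆ 𝓑}
  have h𝔉 : 𝔉.Countable := countable_ofPred_finite_subset h𝓑_count
  have hopen : ∀ 𝒰 ∈ 𝔉, IsOpen (⋃₀ 𝒰) := fun 𝒰 h𝒰 => isOpen_sUnion fun U hU => h𝓑.1 U (h𝒰.2 hU)
  have hrepr : {K : NonemptyCompacts X | CovDimLE (K : Set X) m} = ⋂ 𝒰 ∈ 𝔉,
      ({K : NonemptyCompacts X | (K : Set X) ⊆ ⋃₀ 𝒰}ᶜ ∪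
        ⋃ 𝒢 ∈ 𝔉, {K : NonemptyCompacts X | IsRefinementOfOrderLE (K : Set X) m 𝒰 𝒢}) := by
    ext K
    simp only [mem_ofPred_eq, covDimLE_iff_forall_exists_refinement h𝓑 K.isCompact, mem_iInter₂,
      mem_union, mem_compl_iff, mem_iUnion₂, 𝔉]
    refine forall_congr' fun 𝒰 => ?_
    simp only [and_imp, ← imp_iff_not_or, exists_prop, and_assoc]
    aesop
  rw [hrepr]
  exact .biInter h𝔉 fun 𝒰 h𝒰 => (isOpen_subsets_of_isOpen (hopen 𝒰 h𝒰)).measurableSet.compl.union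
    (.biUnion h𝔉 fun 𝒢 h𝒢 => measurableSet_setOf_isRefinementOfOrderLE h𝒢.1
      (fun G hG => h𝓑.1 G (h𝒢.2 hG)) m 𝒰)

end TopologicalSpace.NonemptyCompacts

section Hereditary

variable {X : Type} [TopologicalSpace X] [T2Space X]

theorem exists_closed_subtype_iff_exists_nonemptyCompacts {K : Set X} (hK : IsCompact K)
    (P : Set X → Prop) :
    (∃ F : Set K, IsClosed F ∧ F.Nonempty ∧ P (Subtype.val '' F)) ↔
      ∃ L : NonemptyCompacts X, (L : Set X) ⊆ K ∧ P L := by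
  have : CompactSpace K := isCompact_iff_compactSpace.1 hK
  constructor
  · rintro ⟨F, hF, hF_ne, hP⟩
    exact ⟨⟨⟨_, hF.isCompact.image continuous_subtype_val⟩, hF_ne.image _⟩,
      image_subset_iff.2 fun x _ => x.2, hP⟩
  · rintro ⟨L, hLK, hP⟩
    refine ⟨Subtype.val ⁻¹' L, L.isCompact.isClosed.preimage continuous_subtype_val, ?_, ?_⟩
    · obtain ⟨x, hx⟩ := L.nonempty
      exact ⟨⟨x, hLK hx⟩, hx⟩
    · rwa [Subtype.image_preimage_coe, inter_eq_right.2 hLK]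

theorem not_hereditarilyInfiniteDimensional_iff (K : NonemptyCompacts X) :
    ¬ HereditarilyInfiniteDimensional (K : Set X) ↔ (∃ m, CovDimLE (K : Set X) m) ∨
      ∃ L : NonemptyCompacts X, (L : Set X) ⊆ K ∧
        (∃ m, CovDimLE (L : Set X) m) ∧ ¬ CovDimLE (L : Set X) 0 := by
  simp only [HereditarilyInfiniteDimensional, not_and_or, not_forall, not_or, not_not,
    exists_prop, ← covDimLE_image_val_iff]
  rw [← exists_closed_subtype_iff_exists_nonemptyCompacts K.isCompact
    fun L => (∃ m, CovDimLE L m) ∧ ¬ CovDimLE L 0]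

end Hereditary

theorem isCoanalytic_setOf_hereditarilyInfiniteDimensional (Y : Type) [MetricSpace Y]
    [CompleteSpace Y] [SecondCountableTopology Y] :
    IsCoanalytic {K : NonemptyCompacts Y | HereditarilyInfiniteDimensional (K : Set Y)} := by
  borelize (NonemptyCompacts Y)
  set D := fun m => {K : NonemptyCompacts Y | CovDimLE (K : Set Y) m}
  have hD : ∀ m, MeasurableSet (D m) := NonemptyCompacts.measurableSet_setOf_covDimLE
  have hcompl : {K : NonemptyCompacts Y | HereditarilyInfiniteDimensional (K : Set Y)}ᶜ =
      (⋃ m, D m) ∪ Prod.fst ''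
        ({p : NonemptyCompacts Y × NonemptyCompacts Y | (p.2 : Set Y) ⊆ p.1} ∩
          Prod.snd ⁻¹' ((⋃ m, D m) \ D 0)) := by
    ext K
    rw [mem_compl_iff, mem_ofPred_eq, not_hereditarilyInfiniteDimensional_iff]
    simp [D]
  rw [IsCoanalytic, hcompl, union_eq_iUnion]
  refine MeasureTheory.AnalyticSet.iUnion
    (Bool.forall_bool.2 ⟨?_, (MeasurableSet.iUnion hD).analyticSet⟩)
  exact (NonemptyCompacts.isClosed_setOf_subset.measurableSet.inter
    (((MeasurableSet.iUnion hD).diff (hD 0)).preimage measurable_snd)).analyticSet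
    |>.image_of_continuous continuous_fst

/-- For every compact metric space `Y`, the family `HID(Y)` of all
hereditarily infinite-dimensional compacta contained in `Y` is a coanalytic subset of
the hyperspace `2^Y`. -/
theorem statement18 (Y : Type) [MetricSpace Y] [CompactSpace Y] :
    IsCoanalytic {K : Hyper Y | HereditarilyInfiniteDimensional (K : Set Y)} :=
  isCoanalytic_setOf_hereditarilyInfiniteDimensional Y
end
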